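/- arXiv:1105.5762 — 5 statements merged into one kernel-verified Lean document; each statement's English description precedes it below -/
import Mathlib

section
/- For ν > 1/2, the function r_ν(t) = I_ν(t)/I_{ν-1}(t) is strictly increasing on (0, ∞), with r_ν(t) → 0 as t ↓ 0 and r_ν(t) → 1 as t → ∞. -/
open Real Set Filter MeasureTheory

/-- Modified Bessel function of the first kind, `I_ν(t) = Σ_k (t/2)^(2k+ν)/(k! Γ(ν+k+1))`. -/
noncomputable def besselI (ν t : ℝ) : ℝ :=
  ∑' k : ℕ, (t / 2) ^ (ν + 2 * (k : ℝ)) / ((Nat.factorial k : ℝ) * Real.Gamma (ν + (k : ℝ) + 1))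

/-- The ratio `r_ν(t) = I_ν(t)/I_{ν-1}(t)`. -/
noncomputable def besselRatio (ν t : ℝ) : ℝ := besselI ν t / besselI (ν - 1) t

set_option maxHeartbeats 1000000

namespace BesselAux

noncomputable def a (μ : ℝ) (k : ℕ) : ℝ :=
  1 / ((Nat.factorial k : ℝ) * Real.Gamma (μ + (k : ℝ) + 1))

lemma a_pos {μ : ℝ} (hμ : -1 < μ) (k : ℕ) : 0 < a μ k := by
  have h1 : (0:ℝ) < (Nat.factorial k : ℝ) := by positivity
  have h2 : (0:ℝ) < Real.Gamma (μ + (k : ℝ) + 1) := by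
    apply Real.Gamma_pos_of_pos
    have : (0:ℝ) ≤ (k:ℝ) := Nat.cast_nonneg k
    linarith
  exact div_pos one_pos (mul_pos h1 h2)

lemma a_succ {μ : ℝ} (hμ : -1 < μ) (k : ℕ) :
    a μ (k + 1) = a μ k / (((k:ℝ) + 1) * (μ + (k:ℝ) + 1)) := by
  have hne : μ + (k:ℝ) + 1 ≠ 0 := by
    have : (0:ℝ) ≤ (k:ℝ) := Nat.cast_nonneg k
    intro h; linarith [h]
  have hG : Real.Gamma (μ + ((k:ℕ):ℝ) + 1 + 1) = (μ + (k:ℝ) + 1) * Real.Gamma (μ + (k:ℝ) + 1) :=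
    Real.Gamma_add_one hne
  have hGpos : Real.Gamma (μ + (k:ℝ) + 1) ≠ 0 := ne_of_gt (by
    apply Real.Gamma_pos_of_pos
    have : (0:ℝ) ≤ (k:ℝ) := Nat.cast_nonneg k
    linarith)
  have hfac : (Nat.factorial (k+1) : ℝ) = ((k:ℝ)+1) * (Nat.factorial k : ℝ) := by
    push_cast [Nat.factorial_succ]; ring
  have hanother : μ + ((k:ℕ)+1 : ℕ) + 1 = μ + ((k:ℝ)) + 1 + 1 := by push_cast; ring
  unfold a
  rw [hanother, hG, hfac]
  have hk1 : ((k:ℝ)+1) ≠ 0 := by positivity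
  have hfacne : (Nat.factorial k : ℝ) ≠ 0 := by positivity
  field_simp

lemma a_shift (μ : ℝ) (k : ℕ) : ((k:ℝ) + 1) * a μ (k + 1) = a (μ + 1) k := by
  unfold a
  have h1 : μ + ((k:ℕ)+1 : ℕ) + 1 = μ + 1 + (k:ℝ) + 1 := by push_cast; ring
  rw [h1]
  have hfac : (Nat.factorial (k+1) : ℝ) = ((k:ℝ)+1) * (Nat.factorial k : ℝ) := by
    push_cast [Nat.factorial_succ]; ring
  rw [hfac]
  have hk1 : ((k:ℝ)+1) ≠ 0 := by positivity
  rcases eq_or_ne (Real.Gamma (μ + 1 + (k:ℝ) + 1)) 0 with hG | hG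
  · simp [hG]
  · have hfacne : (Nat.factorial k : ℝ) ≠ 0 := by positivity
    field_simp

lemma a_lower {μ : ℝ} (hμ : 0 < μ) (k : ℕ) :
    a (μ - 1) k = (μ + (k:ℝ)) * a μ k := by
  unfold a
  have h1 : μ - 1 + (k:ℝ) + 1 = μ + (k:ℝ) := by ring
  rw [h1]
  have hne : μ + (k:ℝ) ≠ 0 := by
    have : (0:ℝ) ≤ (k:ℝ) := Nat.cast_nonneg k
    positivity
  have hG : Real.Gamma (μ + (k:ℝ) + 1) = (μ + (k:ℝ)) * Real.Gamma (μ + (k:ℝ)) := by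
    have := Real.Gamma_add_one hne
    simpa using this
  rw [hG]
  have hGne : Real.Gamma (μ + (k:ℝ)) ≠ 0 := ne_of_gt (Real.Gamma_pos_of_pos (by
    have : (0:ℝ) ≤ (k:ℝ) := Nat.cast_nonneg k
    linarith))
  have hfacne : (Nat.factorial k : ℝ) ≠ 0 := by positivity
  field_simp


lemma summable_master {μ q : ℝ} (hμ : -1 < μ) (hq : 0 ≤ q) :
    Summable (fun k : ℕ => ((k:ℝ) + 1) * a μ k * q ^ k) := by
  apply summable_of_ratio_norm_eventually_le (r := 1/2) (by norm_num)
  filter_upwards [eventually_ge_atTop (max 1 ⌈4*q⌉₊)] with k hk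
  have hk1 : 1 ≤ k := le_of_max_le_left hk
  have hk4 : (4*q : ℝ) ≤ (k:ℝ) := by
    calc (4*q:ℝ) ≤ (⌈4*q⌉₊ : ℝ) := Nat.le_ceil _
    _ ≤ (k:ℝ) := by exact_mod_cast le_of_max_le_right hk
  have hkR : (1:ℝ) ≤ (k:ℝ) := by exact_mod_cast hk1
  have hpos := a_pos hμ k
  have hpos' := a_pos hμ (k+1)
  have hqk : (0:ℝ) ≤ q^k := pow_nonneg hq k
  have hd : (0:ℝ) < ((k:ℝ)+1)*(μ+(k:ℝ)+1) := by
    have h0 : (0:ℝ) < μ + (k:ℝ) + 1 := by linarith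
    positivity
  have h1 : (((k:ℕ)+1:ℕ):ℝ) + 1 = (k:ℝ) + 2 := by push_cast; ring
  have key : ((k:ℝ)+2) * a μ (k+1) * q^(k+1)
      = (a μ k * q^k) * (((k:ℝ)+2)*q / (((k:ℝ)+1)*(μ+(k:ℝ)+1))) := by
    rw [a_succ hμ k, pow_succ]; ring
  have h2 : ((k:ℝ)+2)*q / (((k:ℝ)+1)*(μ+(k:ℝ)+1)) ≤ 1/2 * ((k:ℝ)+1) := by
    rw [div_le_iff₀ hd]
    have hk0 : (0:ℝ) ≤ (k:ℝ) := by linarith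
    nlinarith [mul_le_mul_of_nonneg_left hk4 hk0, sq_nonneg ((k:ℝ)+1),
      mul_nonneg hq hk0, mul_nonneg (mul_nonneg hq hk0) hk0]
  have hfk1 : (0:ℝ) ≤ ((k:ℝ)+2) * a μ (k+1) * q^(k+1) := by positivity
  have hfk : (0:ℝ) ≤ ((k:ℝ)+1) * a μ k * q^k := by positivity
  rw [Real.norm_eq_abs, Real.norm_eq_abs, h1, abs_of_nonneg hfk1, abs_of_nonneg hfk]
  calc ((k:ℝ)+2) * a μ (k+1) * q^(k+1)
      = (a μ k * q^k) * (((k:ℝ)+2)*q / (((k:ℝ)+1)*(μ+(k:ℝ)+1))) := key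
    _ ≤ (a μ k * q^k) * (1/2 * ((k:ℝ)+1)) := by
        apply mul_le_mul_of_nonneg_left h2 (by positivity)
    _ = 1/2 * (((k:ℝ)+1) * a μ k * q^k) := by ring

lemma summable_aq {μ q : ℝ} (hμ : -1 < μ) (hq : 0 ≤ q) :
    Summable (fun k : ℕ => a μ k * q ^ k) := by
  apply Summable.of_nonneg_of_le
    (fun k => mul_nonneg (a_pos hμ k).le (pow_nonneg hq k))
    (fun k => ?_) (summable_master hμ hq)
  have h1 : (0:ℝ) ≤ a μ k * q ^ k := mul_nonneg (a_pos hμ k).le (pow_nonneg hq k)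
  have h2 : (1:ℝ) ≤ (k:ℝ) + 1 := by
    have : (0:ℝ) ≤ (k:ℝ) := Nat.cast_nonneg k
    linarith
  calc a μ k * q ^ k = 1 * (a μ k * q ^ k) := by ring
    _ ≤ ((k:ℝ)+1) * (a μ k * q ^ k) := mul_le_mul_of_nonneg_right h2 h1
    _ = ((k:ℝ)+1) * a μ k * q ^ k := by ring

noncomputable def F (μ x : ℝ) : ℝ := ∑' k : ℕ, a μ k * x ^ k

lemma F_pos {μ x : ℝ} (hμ : -1 < μ) (hx : 0 ≤ x) : 0 < F μ x := by
  have hsum := summable_aq hμ hx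
  apply Summable.tsum_pos hsum (fun k => mul_nonneg (a_pos hμ k).le (pow_nonneg hx k)) 0
  simpa using a_pos hμ 0


lemma summable_deriv_aux {μ x : ℝ} (hμ : -1 < μ) (hx : 0 ≤ x) :
    Summable (fun k : ℕ => a μ k * ((k:ℝ) * x ^ (k - 1))) := by
  rcases eq_or_lt_of_le hx with rfl | hx'
  · apply summable_of_ne_finset_zero (s := {1})
    intro k hk
    match k, hk with
    | 0, _ => simp
    | (n+2), _ => simp [pow_succ]
    | 1, hk => simp at hk
  · apply Summable.of_nonneg_of_le
      (fun k => mul_nonneg (a_pos hμ k).le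
        (mul_nonneg (Nat.cast_nonneg k) (pow_nonneg hx'.le _)))
      (fun k => ?_) ((summable_master hμ hx).mul_left (1/x))
    match k with
    | 0 =>
      simp only [Nat.cast_zero, zero_mul, mul_zero, pow_zero, mul_one]
      have h0 := a_pos hμ 0
      have hx0 : (0:ℝ) ≤ 1/x := by positivity
      nlinarith
    | (n+1) =>
      have h1 : a μ (n+1) * (((n+1:ℕ):ℝ) * x ^ (n+1-1)) =
          (1/x) * (((n:ℝ)+1) * a μ (n+1) * x^(n+1)) := by
        have hxne : x ≠ 0 := ne_of_gt hx'
        push_cast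
        field_simp
        ring
      rw [h1]
      apply mul_le_mul_of_nonneg_left _ (by positivity)
      apply mul_le_mul_of_nonneg_right _ (pow_nonneg hx _)
      have := a_pos hμ (n+1)
      have h2 : ((n:ℝ)+1) ≤ ((n+1:ℕ):ℝ)+1 := by push_cast; linarith
      nlinarith [a_pos hμ (n+1)]

lemma tsum_deriv_shift {μ x : ℝ} (hμ : -1 < μ) (hx : 0 ≤ x) :
    ∑' k : ℕ, a μ k * ((k:ℝ) * x ^ (k - 1)) = F (μ+1) x := by
  have hs := summable_deriv_aux hμ hx
  rw [Summable.tsum_eq_zero_add hs]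
  simp only [Nat.cast_zero, zero_mul, mul_zero, zero_add]
  unfold F
  congr 1
  funext k
  have h1 : a μ (k+1) * (((k+1:ℕ):ℝ) * x ^ (k+1-1)) = (((k:ℝ)+1) * a μ (k+1)) * x ^ k := by
    push_cast; ring
  rw [h1, a_shift]

lemma tsum_kshift {μ x : ℝ} (hμ : -1 < μ) (hx : 0 ≤ x) :
    ∑' k : ℕ, (k:ℝ) * a μ k * x ^ k = x * F (μ+1) x := by
  have hs : Summable (fun k : ℕ => (k:ℝ) * a μ k * x ^ k) := by
    apply Summable.of_nonneg_of_le
      (fun k => mul_nonneg (mul_nonneg (Nat.cast_nonneg k) (a_pos hμ k).le) (pow_nonneg hx k))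
      (fun k => ?_) (summable_master hμ hx)
    have h1 : (0:ℝ) ≤ a μ k * x ^ k := mul_nonneg (a_pos hμ k).le (pow_nonneg hx k)
    have h2 : (k:ℝ) ≤ (k:ℝ) + 1 := by linarith
    calc (k:ℝ) * a μ k * x ^ k = (k:ℝ) * (a μ k * x ^ k) := by ring
      _ ≤ ((k:ℝ)+1) * (a μ k * x ^ k) := mul_le_mul_of_nonneg_right h2 h1
      _ = ((k:ℝ)+1) * a μ k * x ^ k := by ring
  rw [Summable.tsum_eq_zero_add hs]
  simp only [Nat.cast_zero, zero_mul, zero_add]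
  unfold F
  rw [← tsum_mul_left]
  congr 1
  funext k
  have h1 : ((k+1:ℕ):ℝ) * a μ (k+1) * x ^ (k+1) = (((k:ℝ)+1) * a μ (k+1)) * x^k * x := by
    push_cast; ring
  rw [h1, a_shift]
  ring

lemma hasDerivAt_F {μ x : ℝ} (hμ : -1 < μ) (hx : 0 < x) :
    HasDerivAt (F μ) (F (μ+1) x) x := by
  have key : HasDerivAt (fun z => ∑' k : ℕ, a μ k * z ^ k)
      (∑' k : ℕ, a μ k * ((k:ℝ) * x ^ (k - 1))) x := by
    set R := x + 1 with hR
    have hR1 : (1:ℝ) ≤ R := by simp [hR]; linarith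
    have hR0 : (0:ℝ) < R := by linarith
    have hxmem : x ∈ Ioo (0:ℝ) R := ⟨hx, by rw [hR]; linarith⟩
    apply hasDerivAt_tsum_of_isPreconnected
      (u := fun k : ℕ => a μ k * ((k:ℝ) * R ^ (k-1)))
      (g := fun (k : ℕ) (z : ℝ) => a μ k * z ^ k)
      (g' := fun (k : ℕ) (y : ℝ) => a μ k * ((k:ℝ) * y ^ (k-1)))
      (summable_deriv_aux hμ hR0.le) isOpen_Ioo ((convex_Ioo (0:ℝ) R).isPreconnected)
      (fun k y _ => (hasDerivAt_pow k y).const_mul (a μ k))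
      (fun k y hy => ?_) hxmem (summable_aq hμ hx.le) hxmem
    · have hy0 : (0:ℝ) ≤ y := le_of_lt hy.1
      have hyR : y ≤ R := le_of_lt hy.2
      rw [Real.norm_eq_abs, abs_of_nonneg (mul_nonneg (a_pos hμ k).le
        (mul_nonneg (Nat.cast_nonneg k) (pow_nonneg hy0 _)))]
      apply mul_le_mul_of_nonneg_left _ (a_pos hμ k).le
      apply mul_le_mul_of_nonneg_left (pow_le_pow_left₀ hy0 hyR _) (Nat.cast_nonneg k)
  rw [tsum_deriv_shift hμ hx.le] at key
  exact key

lemma F_lower {μ x : ℝ} (hμ : 0 < μ) (hx : 0 ≤ x) :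
    F (μ-1) x = μ * F μ x + x * F (μ+1) x := by
  have hμ1 : (-1:ℝ) < μ := by linarith
  have hs1 : Summable (fun k : ℕ => μ * (a μ k * x ^ k)) := (summable_aq hμ1 hx).mul_left μ
  have hs2 : Summable (fun k : ℕ => (k:ℝ) * a μ k * x ^ k) := by
    apply Summable.of_nonneg_of_le
      (fun k => mul_nonneg (mul_nonneg (Nat.cast_nonneg k) (a_pos hμ1 k).le) (pow_nonneg hx k))
      (fun k => ?_) (summable_master hμ1 hx)
    have h1 : (0:ℝ) ≤ a μ k * x ^ k := mul_nonneg (a_pos hμ1 k).le (pow_nonneg hx k)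
    have h2 : (k:ℝ) ≤ (k:ℝ) + 1 := by linarith
    calc (k:ℝ) * a μ k * x ^ k = (k:ℝ) * (a μ k * x ^ k) := by ring
      _ ≤ ((k:ℝ)+1) * (a μ k * x ^ k) := mul_le_mul_of_nonneg_right h2 h1
      _ = ((k:ℝ)+1) * a μ k * x ^ k := by ring
  have key : F (μ-1) x = ∑' k : ℕ, (μ * (a μ k * x ^ k) + (k:ℝ) * a μ k * x ^ k) := by
    unfold F
    congr 1
    funext k
    rw [a_lower hμ k]
    ring
  rw [key, Summable.tsum_add hs1 hs2, tsum_mul_left, tsum_kshift hμ1 hx]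
  rfl


lemma tendsto_F_zero {μ : ℝ} (hμ : -1 < μ) :
    Tendsto (F μ) (nhdsWithin 0 (Set.Ioi 0)) (nhds (a μ 0)) := by
  have hsum1 : Summable (fun k : ℕ => a μ k) := by
    have := summable_aq hμ (zero_le_one)
    simpa using this
  have hC : Summable (fun k : ℕ => a μ (k+1)) := (summable_nat_add_iff 1).mpr hsum1
  set C := ∑' k : ℕ, a μ (k+1) with hCdef
  have hmem : Ioc (0:ℝ) 1 ∈ nhdsWithin (0:ℝ) (Set.Ioi 0) :=
    Ioc_mem_nhdsGT_of_mem (by constructor <;> norm_num)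
  have hlow : ∀ x ∈ Ioc (0:ℝ) 1, a μ 0 ≤ F μ x := by
    intro x hx
    have hs := summable_aq hμ hx.1.le
    unfold F
    rw [Summable.tsum_eq_zero_add hs]
    simp only [pow_zero, mul_one]
    have : (0:ℝ) ≤ ∑' k : ℕ, a μ (k+1) * x ^ (k+1) :=
      tsum_nonneg (fun k => mul_nonneg (a_pos hμ (k+1)).le (pow_nonneg hx.1.le _))
    linarith
  have hup : ∀ x ∈ Ioc (0:ℝ) 1, F μ x ≤ a μ 0 + C * x := by
    intro x hx
    have hs := summable_aq hμ hx.1.le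
    have hs1 : Summable (fun k : ℕ => a μ (k+1) * x ^ (k+1)) := (summable_nat_add_iff 1).mpr hs
    unfold F
    rw [Summable.tsum_eq_zero_add hs]
    simp only [pow_zero, mul_one]
    have hle : ∑' k : ℕ, a μ (k+1) * x ^ (k+1) ≤ ∑' k : ℕ, a μ (k+1) * x := by
      apply Summable.tsum_le_tsum _ hs1 (hC.mul_right x)
      intro k
      apply mul_le_mul_of_nonneg_left _ (a_pos hμ (k+1)).le
      calc x ^ (k+1) ≤ x ^ 1 := pow_le_pow_of_le_one hx.1.le hx.2 (by omega)
        _ = x := pow_one x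
    rw [tsum_mul_right] at hle
    linarith
  have htop : Tendsto (fun x : ℝ => a μ 0 + C * x) (nhdsWithin 0 (Set.Ioi 0)) (nhds (a μ 0)) := by
    have : Tendsto (fun x : ℝ => a μ 0 + C * x) (nhds 0) (nhds (a μ 0 + C * 0)) := by
      exact (continuous_const.add (continuous_const.mul continuous_id)).tendsto 0
    simpa using this.mono_left nhdsWithin_le_nhds
  apply tendsto_of_tendsto_of_tendsto_of_le_of_le' tendsto_const_nhds htop
  · filter_upwards [hmem] with x hx using hlow x hx
  · filter_upwards [hmem] with x hx using hup x hx

lemma besselI_eq {μ t : ℝ} (ht : 0 < t) :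
    besselI μ t = (t/2) ^ μ * F μ ((t/2)^2) := by
  have ht2 : (0:ℝ) < t/2 := by linarith
  unfold besselI F
  rw [← tsum_mul_left]
  congr 1
  funext k
  have h1 : (t/2) ^ (μ + 2 * (k:ℝ)) = (t/2)^μ * ((t/2)^2)^k := by
    rw [Real.rpow_add ht2]
    congr 1
    rw [show (2 * (k:ℝ)) = ((2*k : ℕ) : ℝ) by push_cast; ring, Real.rpow_natCast, pow_mul]
  rw [h1]
  unfold a
  ring

lemma besselI_pos {μ t : ℝ} (hμ : -1 < μ) (ht : 0 < t) : 0 < besselI μ t := by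
  rw [besselI_eq ht]
  have ht2 : (0:ℝ) < t/2 := by linarith
  exact mul_pos (Real.rpow_pos_of_pos ht2 μ) (F_pos hμ (by positivity))

lemma hasDerivAt_besselI {μ t : ℝ} (hμ : -1 < μ) (ht : 0 < t) :
    HasDerivAt (besselI μ) (besselI (μ+1) t + (μ/t) * besselI μ t) t := by
  have ht2 : (0:ℝ) < t/2 := by linarith
  have hx₀ : (0:ℝ) < (t/2)^2 := by positivity
  have hq : HasDerivAt (fun s : ℝ => (s/2)^2) ((2:ℕ) * (t/2)^(2-1) * (1/2)) t := by
    have := (hasDerivAt_pow 2 (t/2)).comp t ((hasDerivAt_id t).div_const 2); exact this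
  have hq' : HasDerivAt (fun s : ℝ => (s/2)^2) (t/2) t := by
    convert hq using 1
    push_cast
    ring
  have h1 : HasDerivAt (fun s : ℝ => (s/2) ^ μ) (μ * (t/2)^(μ-1) * (1/2)) t :=
    by have := (Real.hasDerivAt_rpow_const (p := μ) (Or.inl (ne_of_gt ht2))).comp t ((hasDerivAt_id t).div_const 2); exact this
  have h2 : HasDerivAt (fun s : ℝ => F μ ((s/2)^2)) (F (μ+1) ((t/2)^2) * (t/2)) t :=
    by have := (hasDerivAt_F hμ hx₀).comp t hq'; exact this
  have hmul := h1.mul h2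
  have heq : (fun s : ℝ => besselI μ s) =ᶠ[nhds t] (fun s => (s/2)^μ * F μ ((s/2)^2)) := by
    filter_upwards [Ioi_mem_nhds ht] with s hs
    exact besselI_eq hs
  have hD : HasDerivAt (besselI μ)
      (μ * (t/2)^(μ-1) * (1/2) * F μ ((t/2)^2) + (t/2)^μ * (F (μ+1) ((t/2)^2) * (t/2))) t :=
    hmul.congr_of_eventuallyEq heq
  convert hD using 1
  rw [besselI_eq (show (0:ℝ) < t from ht), besselI_eq (show (0:ℝ) < t from ht)]
  have e1 : (t/2) ^ (μ+1) = (t/2)^μ * (t/2) := by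
    rw [Real.rpow_add ht2, Real.rpow_one]
  have e2 : (t/2) ^ μ = (t/2)^(μ-1) * (t/2) := by
    rw [show μ = (μ-1)+1 by ring]
    rw [Real.rpow_add ht2, Real.rpow_one]
    ring_nf
  rw [e1, e2]
  have htne : t ≠ 0 := ne_of_gt ht
  field_simp
  ring

lemma besselI_recur {μ t : ℝ} (hμ : 0 < μ) (ht : 0 < t) :
    besselI (μ-1) t = besselI (μ+1) t + (2*μ/t) * besselI μ t := by
  have ht2 : (0:ℝ) < t/2 := by linarith
  have hx₀ : (0:ℝ) ≤ (t/2)^2 := by positivity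
  rw [besselI_eq ht, besselI_eq ht, besselI_eq ht, F_lower hμ hx₀]
  have e1 : (t/2) ^ (μ+1) = (t/2)^(μ-1) * (t/2)^2 := by
    rw [← Real.rpow_natCast (t/2) 2, ← Real.rpow_add ht2]
    norm_num
    congr 1
    ring
  have e2 : (t/2) ^ μ = (t/2)^(μ-1) * (t/2) := by
    rw [show μ = (μ-1)+1 by ring, Real.rpow_add ht2, Real.rpow_one]
    ring_nf
  rw [e1, e2]
  have htne : t ≠ 0 := ne_of_gt ht
  field_simp
  ring


noncomputable def gfun (ν t : ℝ) : ℝ :=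
  1 - (2*ν-1)/t * besselRatio ν t - (besselRatio ν t)^2

lemma ratio_pos {ν t : ℝ} (hν : 1/2 < ν) (ht : 0 < t) : 0 < besselRatio ν t := by
  unfold besselRatio
  exact div_pos (besselI_pos (by linarith) ht) (besselI_pos (by linarith) ht)

lemma hasDerivAt_ratio {ν t : ℝ} (hν : 1/2 < ν) (ht : 0 < t) :
    HasDerivAt (fun s => besselRatio ν s) (gfun ν t) t := by
  have hν1 : (-1:ℝ) < ν := by linarith
  have hν1' : (-1:ℝ) < ν - 1 := by linarith
  have htne : t ≠ 0 := ne_of_gt ht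
  have hu : HasDerivAt (besselI ν) (besselI (ν+1) t + (ν/t) * besselI ν t) t :=
    hasDerivAt_besselI hν1 ht
  have hv : HasDerivAt (besselI (ν-1)) (besselI ν t + ((ν-1)/t) * besselI (ν-1) t) t := by
    have h := hasDerivAt_besselI hν1' ht
    rwa [show ν-1+1 = ν by ring] at h
  have hvne : besselI (ν-1) t ≠ 0 := ne_of_gt (besselI_pos hν1' ht)
  have hdiv := hu.div hv hvne
  have hrec := besselI_recur (show (0:ℝ) < ν by linarith) ht
  have hgoal : gfun ν t = ((besselI (ν+1) t + (ν/t) * besselI ν t) * besselI (ν-1) t -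
      besselI ν t * (besselI ν t + ((ν-1)/t) * besselI (ν-1) t)) / (besselI (ν-1) t)^2 := by
    have hw : besselI (ν+1) t = besselI (ν-1) t - (2*ν/t) * besselI ν t := by linarith
    rw [hw]
    unfold gfun besselRatio
    field_simp
    ring
  rw [hgoal]
  exact hdiv

lemma continuousAt_ratio {ν t : ℝ} (hν : 1/2 < ν) (ht : 0 < t) :
    ContinuousAt (fun s => besselRatio ν s) t :=
  (hasDerivAt_ratio hν ht).continuousAt

lemma continuousAt_gfun {ν t : ℝ} (hν : 1/2 < ν) (ht : 0 < t) :
    ContinuousAt (gfun ν) t := by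
  have hr := continuousAt_ratio hν ht
  have h1 : ContinuousAt (fun s : ℝ => (2*ν-1)/s) t :=
    (continuousAt_const.div continuousAt_id (ne_of_gt ht))
  exact (continuousAt_const.sub (h1.mul hr)).sub (hr.pow 2)

lemma hasDerivAt_gfun {ν t : ℝ} (hν : 1/2 < ν) (ht : 0 < t) :
    HasDerivAt (gfun ν)
      (-((-(2*ν-1)/t^2) * besselRatio ν t + ((2*ν-1)/t) * gfun ν t)
        - 2 * besselRatio ν t ^ 1 * gfun ν t) t := by
  have hr := hasDerivAt_ratio hν ht
  have htne : t ≠ 0 := ne_of_gt ht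
  have h1 : HasDerivAt (fun s : ℝ => (2*ν-1)/s) (-(2*ν-1)/t^2) t := by
    have := (hasDerivAt_const t (2*ν-1)).fun_div (hasDerivAt_id t) htne
    exact this.congr_deriv (by simp only [id, zero_mul, zero_sub, mul_one])
  have h2 : HasDerivAt (fun s : ℝ => (2*ν-1)/s * besselRatio ν s)
      ((-(2*ν-1)/t^2) * besselRatio ν t + ((2*ν-1)/t) * gfun ν t) t := h1.mul hr
  have h3 : HasDerivAt (fun s : ℝ => (besselRatio ν s)^2)
      (2 * besselRatio ν t ^ 1 * gfun ν t) t := by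
    have := hr.fun_pow 2
    exact this.congr_deriv (by norm_num)
  have h4 := ((hasDerivAt_const t (1:ℝ)).fun_sub h2).fun_sub h3
  exact h4.congr_deriv (by ring)


lemma ratio_eq_F {ν t : ℝ} (hν : 1/2 < ν) (ht : 0 < t) :
    besselRatio ν t = (t/2) * (F ν ((t/2)^2) / F (ν-1) ((t/2)^2)) := by
  have ht2 : (0:ℝ) < t/2 := by linarith
  have hx : (0:ℝ) ≤ (t/2)^2 := by positivity
  unfold besselRatio
  rw [besselI_eq ht, besselI_eq ht]
  have e2 : (t/2) ^ ν = (t/2)^(ν-1) * (t/2) := by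
    rw [show ν = (ν-1)+1 by ring, Real.rpow_add ht2, Real.rpow_one]
    ring_nf
  rw [e2]
  have h1 : (t/2)^(ν-1) ≠ 0 := ne_of_gt (Real.rpow_pos_of_pos ht2 _)
  have h2 : F (ν-1) ((t/2)^2) ≠ 0 := ne_of_gt (F_pos (by linarith) hx)
  rw [mul_assoc, mul_div_mul_left _ _ h1, mul_div_assoc]

lemma tendsto_sq_zero : Tendsto (fun t : ℝ => (t/2)^2)
    (nhdsWithin 0 (Set.Ioi 0)) (nhdsWithin 0 (Set.Ioi 0)) := by
  rw [tendsto_nhdsWithin_iff]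
  constructor
  · have h : Tendsto (fun t : ℝ => (t/2)^2) (nhds 0) (nhds (((0:ℝ)/2)^2)) :=
      ((continuous_id.div_const 2).pow 2).tendsto 0
    simpa using h.mono_left nhdsWithin_le_nhds
  · filter_upwards [self_mem_nhdsWithin] with t ht
    have : (0:ℝ) < t := ht
    exact mem_Ioi.mpr (by positivity)

lemma tendsto_Fratio {ν : ℝ} (hν : 1/2 < ν) :
    Tendsto (fun t : ℝ => F ν ((t/2)^2) / F (ν-1) ((t/2)^2))
      (nhdsWithin 0 (Set.Ioi 0)) (nhds (1/ν)) := by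
  have hν1 : (-1:ℝ) < ν := by linarith
  have hν1' : (-1:ℝ) < ν - 1 := by linarith
  have hνne : ν ≠ 0 := by linarith
  have h1 : Tendsto (fun t : ℝ => F ν ((t/2)^2)) (nhdsWithin 0 (Set.Ioi 0)) (nhds (a ν 0)) :=
    (tendsto_F_zero hν1).comp tendsto_sq_zero
  have h2 : Tendsto (fun t : ℝ => F (ν-1) ((t/2)^2)) (nhdsWithin 0 (Set.Ioi 0))
      (nhds (a (ν-1) 0)) := (tendsto_F_zero hν1').comp tendsto_sq_zero
  have hne : a (ν-1) 0 ≠ 0 := ne_of_gt (a_pos hν1' 0)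
  have h3 := h1.div h2 hne
  have key : a ν 0 / a (ν-1) 0 = 1/ν := by
    unfold a
    have hG : Real.Gamma (ν + (0:ℕ) + 1) = ν * Real.Gamma ν := by
      rw [show ν + ((0:ℕ):ℝ) + 1 = ν + 1 by push_cast; ring]
      exact Real.Gamma_add_one hνne
    have hG2 : Real.Gamma (ν - 1 + (0:ℕ) + 1) = Real.Gamma ν := by
      norm_num
    rw [hG, hG2]
    have hGne : Real.Gamma ν ≠ 0 := ne_of_gt (Real.Gamma_pos_of_pos (by linarith))
    field_simp
  rwa [key] at h3

lemma tendsto_ratio_zero {ν : ℝ} (hν : 1/2 < ν) :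
    Tendsto (fun t : ℝ => besselRatio ν t) (nhdsWithin 0 (Set.Ioi 0)) (nhds 0) := by
  have h1 : Tendsto (fun t : ℝ => (t/2) * (F ν ((t/2)^2) / F (ν-1) ((t/2)^2)))
      (nhdsWithin 0 (Set.Ioi 0)) (nhds (0 * (1/ν))) := by
    apply Tendsto.mul _ (tendsto_Fratio hν)
    have h : Tendsto (fun t : ℝ => t/2) (nhds 0) (nhds ((0:ℝ)/2)) :=
      (continuous_id.div_const 2).tendsto 0
    simpa using h.mono_left nhdsWithin_le_nhds
  rw [zero_mul] at h1
  apply Tendsto.congr' _ h1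
  filter_upwards [self_mem_nhdsWithin] with t ht
  exact (ratio_eq_F hν ht).symm

lemma tendsto_gfun_zero {ν : ℝ} (hν : 1/2 < ν) :
    Tendsto (gfun ν) (nhdsWithin 0 (Set.Ioi 0)) (nhds (1/(2*ν))) := by
  have hνne : ν ≠ 0 := by linarith
  have h1 : Tendsto (fun t : ℝ => 1 - (2*ν-1)*(1/2) * (F ν ((t/2)^2) / F (ν-1) ((t/2)^2))
      - (besselRatio ν t)^2)
      (nhdsWithin 0 (Set.Ioi 0)) (nhds (1 - (2*ν-1)*(1/2)*(1/ν) - 0^2)) := by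
    apply Tendsto.sub
    · exact (tendsto_const_nhds.sub ((tendsto_const_nhds.mul (tendsto_Fratio hν))))
    · exact (tendsto_ratio_zero hν).pow 2
  have hval : 1 - (2*ν-1)*(1/2)*(1/ν) - (0:ℝ)^2 = 1/(2*ν) := by
    field_simp
    ring
  rw [hval] at h1
  apply Tendsto.congr' _ h1
  filter_upwards [self_mem_nhdsWithin] with t ht
  have htne : t ≠ 0 := ne_of_gt ht
  unfold gfun
  congr 1
  congr 1
  rw [ratio_eq_F hν ht]
  set R := F ν ((t/2)^2) / F (ν-1) ((t/2)^2) with hR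
  symm
  calc (2*ν-1)/t * ((t/2) * R) = (t/t) * ((2*ν-1) * (1/2) * R) := by ring
    _ = (2*ν-1) * (1/2) * R := by rw [div_self htne, one_mul]

lemma gfun_pos {ν : ℝ} (hν : 1/2 < ν) : ∀ t > 0, 0 < gfun ν t := by
  by_contra hcon
  push_neg at hcon
  obtain ⟨t₁, ht₁, hg₁⟩ := hcon
  have hνpos : (0:ℝ) < 1/(2*ν) := by positivity
  have hev : ∀ᶠ t in nhdsWithin (0:ℝ) (Set.Ioi 0), 0 < gfun ν t := by
    have := (tendsto_gfun_zero hν).eventually (eventually_gt_nhds hνpos)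
    exact this.mono (fun t ht => ht)
  obtain ⟨u, hu, hIoo⟩ := mem_nhdsGT_iff_exists_Ioo_subset.mp hev
  have hu0 : (0:ℝ) < u := hu
  set S : Set ℝ := {t : ℝ | 0 < t ∧ gfun ν t ≤ 0} with hSdef
  have hSne : S.Nonempty := ⟨t₁, ht₁, hg₁⟩
  have hSbd : ∀ s ∈ S, u ≤ s := by
    intro s hs
    by_contra hsu
    push_neg at hsu
    have : s ∈ Ioo (0:ℝ) u := ⟨hs.1, hsu⟩
    have := hIoo this
    exact absurd hs.2 (not_le.mpr this)
  have hbdd : BddBelow S := ⟨u, hSbd⟩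
  set t₀ := sInf S with ht₀def
  have ht₀u : u ≤ t₀ := le_csInf hSne hSbd
  have ht₀pos : 0 < t₀ := lt_of_lt_of_le hu0 ht₀u
  have hbelow : ∀ s, 0 < s → s < t₀ → 0 < gfun ν s := by
    intro s hs hst
    by_contra hneg
    push_neg at hneg
    have : s ∈ S := ⟨hs, hneg⟩
    exact absurd (csInf_le hbdd this) (not_le.mpr hst)
  have hc : ContinuousAt (gfun ν) t₀ := continuousAt_gfun hν ht₀pos
  have hge : 0 ≤ gfun ν t₀ := by
    have htend : Tendsto (gfun ν) (nhdsWithin t₀ (Set.Iio t₀)) (nhds (gfun ν t₀)) :=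
      hc.continuousWithinAt.tendsto
    apply ge_of_tendsto htend
    filter_upwards [Ioo_mem_nhdsLT_of_mem (show t₀ ∈ Ioc (0:ℝ) t₀ from ⟨ht₀pos, le_refl _⟩)]
      with s hs
    exact (hbelow s hs.1 hs.2).le
  have hle : gfun ν t₀ ≤ 0 := by
    by_contra hpos
    push_neg at hpos
    have hev2 : ∀ᶠ s in nhds t₀, 0 < gfun ν s := hc.eventually (eventually_gt_nhds hpos)
    rw [Metric.eventually_nhds_iff] at hev2
    obtain ⟨ε, hε, hball⟩ := hev2
    have : sInf S < t₀ + ε := by linarith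
    obtain ⟨s, hsS, hslt⟩ := (csInf_lt_iff hbdd hSne).mp this
    have hst₀ : t₀ ≤ s := csInf_le hbdd hsS
    have : dist s t₀ < ε := by
      rw [Real.dist_eq, abs_of_nonneg (by linarith)]
      linarith
    exact absurd hsS.2 (not_le.mpr (hball this))
  have hzero : gfun ν t₀ = 0 := le_antisymm hle hge
  -- derivative of gfun at t₀ is positive
  have hD := hasDerivAt_gfun hν ht₀pos
  rw [hzero] at hD
  have hrpos := ratio_pos hν ht₀pos
  have hDval : (-((-(2*ν-1)/t₀^2) * besselRatio ν t₀ + ((2*ν-1)/t₀) * 0)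
      - 2 * besselRatio ν t₀ ^ 1 * 0) = (2*ν-1) * besselRatio ν t₀ / t₀^2 := by
    field_simp
    ring
  rw [hDval] at hD
  have hDpos : 0 < (2*ν-1) * besselRatio ν t₀ / t₀^2 := by
    apply div_pos (mul_pos (by linarith) hrpos) (by positivity)
  rw [hasDerivAt_iff_tendsto_slope] at hD
  have hD' : Tendsto (slope (gfun ν) t₀) (nhdsWithin t₀ (Set.Iio t₀))
      (nhds ((2*ν-1) * besselRatio ν t₀ / t₀^2)) :=
    hD.mono_left (nhdsWithin_mono _ (fun s hs => ne_of_lt hs))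
  have hev3 : ∀ᶠ s in nhdsWithin t₀ (Set.Iio t₀), 0 < slope (gfun ν) t₀ s :=
    hD'.eventually (eventually_gt_nhds hDpos)
  have hev4 : ∀ᶠ s in nhdsWithin t₀ (Set.Iio t₀), s ∈ Ioo (0:ℝ) t₀ :=
    eventually_of_mem (Ioo_mem_nhdsLT_of_mem ⟨ht₀pos, le_refl _⟩) (fun s hs => hs)
  obtain ⟨s, hslope, hsIoo⟩ := (hev3.and hev4).exists
  have hgs : 0 < gfun ν s := hbelow s hsIoo.1 hsIoo.2
  have : slope (gfun ν) t₀ s < 0 := by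
    rw [slope_def_field]
    have hnum : gfun ν s - gfun ν t₀ > 0 := by rw [hzero]; linarith
    have hden : s - t₀ < 0 := by linarith [hsIoo.2]
    exact div_neg_of_pos_of_neg hnum hden
  linarith [hslope, this]


lemma strictMono_ratio {ν : ℝ} (hν : 1/2 < ν) :
    StrictMonoOn (fun t : ℝ => besselRatio ν t) (Set.Ioi 0) := by
  apply strictMonoOn_of_deriv_pos (convex_Ioi 0)
  · exact fun x hx => (continuousAt_ratio hν hx).continuousWithinAt
  · intro x hx
    rw [interior_Ioi] at hx
    rw [(hasDerivAt_ratio hν hx).deriv]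
    exact gfun_pos hν x hx

lemma ratio_lt_one {ν t : ℝ} (hν : 1/2 < ν) (ht : 0 < t) : besselRatio ν t < 1 := by
  by_contra h
  push_neg at h
  have hg := gfun_pos hν t ht
  have hgdef : gfun ν t = 1 - (2*ν-1)/t * besselRatio ν t - besselRatio ν t^2 := rfl
  have hd : 0 < (2*ν-1)/t := div_pos (by linarith) ht
  have hrp := ratio_pos hν ht
  nlinarith

lemma tendsto_ratio_atTop {ν : ℝ} (hν : 1/2 < ν) :
    Tendsto (fun t : ℝ => besselRatio ν t) atTop (nhds 1) := by
  set Sim := (fun t : ℝ => besselRatio ν t) '' (Set.Ioi 0) with hSim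
  have hne : Sim.Nonempty := ⟨besselRatio ν 1, ⟨1, by norm_num, rfl⟩⟩
  have hbd : BddAbove Sim := by
    refine ⟨1, ?_⟩
    rintro y ⟨t, ht, rfl⟩
    exact (ratio_lt_one hν ht).le
  set M := sSup Sim with hM
  have hub : ∀ t : ℝ, 0 < t → besselRatio ν t ≤ M := fun t ht => le_csSup hbd ⟨t, ht, rfl⟩
  have hM1 : M ≤ 1 := by
    apply csSup_le hne
    rintro y ⟨t, ht, rfl⟩
    exact (ratio_lt_one hν ht).le
  have hM0 : 0 < M := lt_of_lt_of_le (ratio_pos hν one_pos) (hub 1 one_pos)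
  have htendM : Tendsto (fun t : ℝ => besselRatio ν t) atTop (nhds M) := by
    rw [Metric.tendsto_atTop]
    intro ε hε
    obtain ⟨y, hymem, hy⟩ := exists_lt_of_lt_csSup hne (show M - ε < M by linarith)
    obtain ⟨t₁, ht₁, rfl⟩ := hymem
    refine ⟨max t₁ 1, fun t ht => ?_⟩
    have ht0 : 0 < t := lt_of_lt_of_le one_pos (le_trans (le_max_right t₁ 1) ht)
    have ht₁t : t₁ ≤ t := le_trans (le_max_left t₁ 1) ht
    have hr1 : besselRatio ν t₁ ≤ besselRatio ν t :=
      (strictMono_ratio hν).monotoneOn ht₁ (mem_Ioi.mpr ht0) ht₁t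
    have hrM : besselRatio ν t ≤ M := hub t ht0
    rw [Real.dist_eq, abs_of_nonpos (by linarith)]
    linarith
  have hMeq : M = 1 := by
    rcases lt_or_eq_of_le hM1 with hMlt | h
    · exfalso
      set c := 1 - M^2 with hc
      have hcpos : 0 < c := by nlinarith
      set T := max (2*(2*ν-1)/c) 1 with hT
      have hT1 : (1:ℝ) ≤ T := le_max_right _ 1
      have hT0 : (0:ℝ) < T := lt_of_lt_of_le one_pos hT1
      have hcont : ContinuousOn (fun t : ℝ => besselRatio ν t) (Set.Ici T) :=
        fun x hx => (continuousAt_ratio hν (lt_of_lt_of_le hT0 hx)).continuousWithinAt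
      have hdiff : DifferentiableOn ℝ (fun t : ℝ => besselRatio ν t)
          (interior (Set.Ici T)) := by
        intro x hx
        rw [interior_Ici] at hx
        exact (hasDerivAt_ratio hν (lt_trans hT0 hx)).differentiableAt.differentiableWithinAt
      have hderiv : ∀ x ∈ interior (Set.Ici T), c/2 ≤ deriv (fun t : ℝ => besselRatio ν t) x := by
        intro x hx
        rw [interior_Ici] at hx
        have hx0 : 0 < x := lt_trans hT0 hx
        rw [(hasDerivAt_ratio hν hx0).deriv]
        have hgdef : gfun ν x = 1 - (2*ν-1)/x * besselRatio ν x - besselRatio ν x^2 := rfl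
        have hrp := ratio_pos hν hx0
        have hrM := hub x hx0
        have hr1 : besselRatio ν x < 1 := ratio_lt_one hν hx0
        have hb1 : (2*ν-1)/x * besselRatio ν x ≤ (2*ν-1)/x := by
          have h2 : 0 ≤ (2*ν-1)/x := (div_pos (by linarith) hx0).le
          nlinarith
        have hb2 : (2*ν-1)/x ≤ c/2 := by
          rw [div_le_iff₀ hx0]
          have hxT : 2*(2*ν-1)/c ≤ x := le_trans (le_max_left _ 1) hx.le
          have := (div_le_iff₀ hcpos).mp hxT
          nlinarith
        have hb3 : besselRatio ν x^2 ≤ M^2 := by nlinarith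
        rw [hgdef]
        have : c = 1 - M^2 := hc
        nlinarith
      have hmvt := (convex_Ici T).mul_sub_le_image_sub_of_le_deriv hcont hdiff hderiv
        T (self_mem_Ici) (T + 4/c) (by simp; positivity) (by linarith [div_pos (by norm_num : (0:ℝ) < 4) hcpos])
      have hval : c/2 * ((T + 4/c) - T) = 2 := by
        field_simp
        ring
      rw [hval] at hmvt
      have h1 : besselRatio ν (T + 4/c) < 1 :=
        ratio_lt_one hν (by positivity)
      have h2 : 0 < besselRatio ν T := ratio_pos hν hT0
      linarith
    · exact h
  rw [hMeq] at htendM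
  exact htendM

end BesselAux

/-- for `ν > 1/2`, `r_ν` is strictly increasing on `(0, ∞)`, tends to `0`
as `t ↓ 0` and to `1` as `t → ∞`. -/
theorem besselRatio_strictMono_and_limits (ν : ℝ) (hν : 1 / 2 < ν) :
    StrictMonoOn (fun t : ℝ => besselRatio ν t) (Set.Ioi 0) ∧
    Filter.Tendsto (fun t : ℝ => besselRatio ν t) (nhdsWithin 0 (Set.Ioi 0)) (nhds 0) ∧
    Filter.Tendsto (fun t : ℝ => besselRatio ν t) Filter.atTop (nhds 1) := by
  exact ⟨BesselAux.strictMono_ratio hν, BesselAux.tendsto_ratio_zero hν,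
    BesselAux.tendsto_ratio_atTop hν⟩
end

section
/- Fix ν ≥ 3/2 and define h_ν(t) = r'_ν(t) - (2ν-1)/t² with r_ν(t) = I_ν(t)/I_{ν-1}(t). Then h_ν(t) ≤ 0 for all t > 0. Consequently, for every a ≥ 0, the noncentral chi density f(t) = (t^ν/a^{ν-1}) exp(-(t²+a²)/2) I_{ν-1}(at) is log-concave on (0, ∞). -/
open Real Set Filter MeasureTheory

noncomputable def besselS (p x : ℝ) : ℝ :=
  ∑' k : ℕ, x ^ k / ((Nat.factorial k : ℝ) * Real.Gamma (p + (k : ℝ) + 1))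

lemma auxGammaPos (p : ℝ) (hp : 0 < p) (k : ℕ) : 0 < Real.Gamma (p + (k : ℝ) + 1) :=
  Real.Gamma_pos_of_pos (by positivity)

lemma auxFactGamma (p : ℝ) (hp : 0 < p) (k : ℕ) :
    (Nat.factorial k : ℝ) * Real.Gamma (p + 1) ≤ Real.Gamma (p + (k : ℝ) + 1) := by
  induction k with
  | zero => simp
  | succ n ih =>
    have h1 : (p + ((n + 1 : ℕ) : ℝ) + 1) = (p + (n : ℝ) + 1) + 1 := by push_cast; ring
    have h2 : (0 : ℝ) < p + (n : ℝ) + 1 := by positivity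
    rw [h1, Real.Gamma_add_one h2.ne']
    have h3 : ((Nat.factorial (n + 1) : ℕ) : ℝ) = ((n : ℝ) + 1) * (Nat.factorial n : ℝ) := by
      rw [Nat.factorial_succ]; push_cast; ring
    rw [h3]
    have h4 : (0 : ℝ) < Real.Gamma (p + (n : ℝ) + 1) := auxGammaPos p hp n
    have h5 : ((n : ℝ) + 1) * ((Nat.factorial n : ℝ) * Real.Gamma (p + 1))
        ≤ ((n : ℝ) + 1) * Real.Gamma (p + (n : ℝ) + 1) :=
      mul_le_mul_of_nonneg_left ih (by positivity)
    nlinarith [h4, hp]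

lemma besselS_summable (p : ℝ) (hp : 0 < p) (x : ℝ) :
    Summable (fun k : ℕ => x ^ k / ((Nat.factorial k : ℝ) * Real.Gamma (p + (k : ℝ) + 1))) := by
  have hΓ1 : (0 : ℝ) < Real.Gamma (p + 1) := Real.Gamma_pos_of_pos (by positivity)
  apply Summable.of_norm_bounded (g := fun k : ℕ => (1 / Real.Gamma (p + 1)) * (|x| ^ k / (Nat.factorial k : ℝ)))
    ((Real.summable_pow_div_factorial |x|).mul_left _)
  intro k
  have hg := auxGammaPos p hp k
  have hfg := auxFactGamma p hp k
  have hk : (0 : ℝ) < (Nat.factorial k : ℝ) := by positivity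
  have hk1 : (1 : ℝ) ≤ (Nat.factorial k : ℝ) := by
    exact_mod_cast Nat.one_le_iff_ne_zero.mpr (Nat.factorial_ne_zero k)
  have hΓge : Real.Gamma (p + 1) ≤ Real.Gamma (p + (k : ℝ) + 1) := by nlinarith
  have h1 : ‖x ^ k / ((Nat.factorial k : ℝ) * Real.Gamma (p + (k : ℝ) + 1))‖
      = |x| ^ k / ((Nat.factorial k : ℝ) * Real.Gamma (p + (k : ℝ) + 1)) := by
    rw [Real.norm_eq_abs, abs_div, abs_pow, abs_of_pos (show (0:ℝ) < (Nat.factorial k : ℝ) * Real.Gamma (p + (k:ℝ) + 1) by positivity)]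
  rw [h1]
  have h2 : |x| ^ k / ((Nat.factorial k : ℝ) * Real.Gamma (p + (k : ℝ) + 1))
      ≤ |x| ^ k / ((Nat.factorial k : ℝ) * Real.Gamma (p + 1)) := by
    apply div_le_div_of_nonneg_left (by positivity) (by positivity)
    exact mul_le_mul_of_nonneg_left hΓge hk.le
  calc _ ≤ |x| ^ k / ((Nat.factorial k : ℝ) * Real.Gamma (p + 1)) := h2
    _ = (1 / Real.Gamma (p + 1)) * (|x| ^ k / (Nat.factorial k : ℝ)) := by
        rw [div_mul_div_comm, one_mul, mul_comm]


lemma besselS_def (p x : ℝ) : besselS p x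
    = ∑' k : ℕ, x ^ k / ((Nat.factorial k : ℝ) * Real.Gamma (p + (k : ℝ) + 1)) := rfl

lemma besselS_deriv_summable (p : ℝ) (hp : 0 < p) (R : ℝ) :
    Summable (fun k : ℕ => (k : ℝ) * R ^ (k - 1) / ((Nat.factorial k : ℝ) * Real.Gamma (p + (k : ℝ) + 1))) := by
  rw [← summable_nat_add_iff 1]
  have key : ∀ n : ℕ, ((n + 1 : ℕ) : ℝ) * R ^ ((n + 1) - 1) / ((Nat.factorial (n + 1) : ℝ) * Real.Gamma (p + ((n + 1 : ℕ) : ℝ) + 1))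
      = R ^ n / ((Nat.factorial n : ℝ) * Real.Gamma ((p + 1) + (n : ℝ) + 1)) := by
    intro n
    have h1 : ((Nat.factorial (n + 1) : ℕ) : ℝ) = ((n : ℝ) + 1) * (Nat.factorial n : ℝ) := by
      rw [Nat.factorial_succ]; push_cast; ring
    have h2 : (p + ((n + 1 : ℕ) : ℝ) + 1) = ((p + 1) + (n : ℝ) + 1) := by push_cast; ring
    have h3 : (0:ℝ) < Real.Gamma ((p+1) + (n:ℝ) + 1) := auxGammaPos (p+1) (by positivity) n
    have h4 : (0:ℝ) < (Nat.factorial n : ℝ) := by positivity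
    rw [h1, h2, Nat.add_sub_cancel]
    push_cast
    field_simp
  simp only [key]
  exact besselS_summable (p + 1) (by positivity) R

lemma besselS_hasDerivAt (p : ℝ) (hp : 0 < p) (x : ℝ) :
    HasDerivAt (fun y => besselS p y) (besselS (p + 1) x) x := by
  have hfun : (fun y => besselS p y) = fun y => ∑' k : ℕ, y ^ k / ((Nat.factorial k : ℝ) * Real.Gamma (p + (k : ℝ) + 1)) := by
    funext y; exact besselS_def p y
  rw [hfun]
  set R := |x| + 1 with hR
  have hRpos : (0:ℝ) < R := by positivity
  have hmem : x ∈ Ioo (-R) R := ⟨by simp only [hR]; nlinarith [neg_abs_le x], by simp only [hR]; nlinarith [le_abs_self x]⟩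
  have hu := besselS_deriv_summable p hp R
  have key := hasDerivAt_tsum_of_isPreconnected hu isOpen_Ioo (convex_Ioo (-R) R).isPreconnected
    (g := fun (k : ℕ) (y : ℝ) => y ^ k / ((Nat.factorial k : ℝ) * Real.Gamma (p + (k : ℝ) + 1)))
    (g' := fun (k : ℕ) (y : ℝ) => (k : ℝ) * y ^ (k - 1) / ((Nat.factorial k : ℝ) * Real.Gamma (p + (k : ℝ) + 1)))
    (fun k y _ => (hasDerivAt_pow k y).div_const _)
    (fun k y hy => by
      have h1 : |y| ≤ R := by
        rw [abs_le]; exact ⟨hy.1.le, hy.2.le⟩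
      have h2 : (0:ℝ) < (Nat.factorial k : ℝ) * Real.Gamma (p + (k:ℝ) + 1) := by
        have := auxGammaPos p hp k; positivity
      rw [Real.norm_eq_abs, abs_div, abs_of_pos h2, abs_mul, Nat.abs_cast, abs_pow]
      gcongr)
    hmem (besselS_summable p hp x) hmem
  suffices h : (∑' k : ℕ, (k : ℝ) * x ^ (k - 1) / ((Nat.factorial k : ℝ) * Real.Gamma (p + (k : ℝ) + 1)))
      = besselS (p + 1) x by rw [← h]; exact key
  have hs : Summable (fun k : ℕ => (k : ℝ) * x ^ (k - 1) / ((Nat.factorial k : ℝ) * Real.Gamma (p + (k : ℝ) + 1))) :=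
    besselS_deriv_summable p hp x
  rw [hs.tsum_eq_zero_add]
  simp only [Nat.cast_zero, zero_mul, zero_div, zero_add]
  rw [besselS_def]
  apply tsum_congr
  intro n
  have h1 : ((Nat.factorial (n + 1) : ℕ) : ℝ) = ((n : ℝ) + 1) * (Nat.factorial n : ℝ) := by
    rw [Nat.factorial_succ]; push_cast; ring
  have h2 : (p + ((n + 1 : ℕ) : ℝ) + 1) = ((p + 1) + (n : ℝ) + 1) := by push_cast; ring
  have h3 : (0:ℝ) < Real.Gamma ((p+1) + (n:ℝ) + 1) := auxGammaPos (p+1) (by positivity) n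
  have h4 : (0:ℝ) < (Nat.factorial n : ℝ) := by positivity
  rw [h1, h2, Nat.add_sub_cancel]
  push_cast
  field_simp

lemma besselS_pos (p : ℝ) (hp : 0 < p) (x : ℝ) (hx : 0 ≤ x) : 0 < besselS p x := by
  rw [besselS_def]
  apply Summable.tsum_pos (besselS_summable p hp x) ?_ 0
  · have h0 := auxGammaPos p hp 0
    simp only [pow_zero, Nat.factorial_zero, Nat.cast_one, one_mul, Nat.cast_zero]
    have : (0:ℝ) < Real.Gamma (p + 0 + 1) := by simpa using h0
    positivity
  · intro k
    have := auxGammaPos p hp k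
    positivity

lemma besselI_eq (p t : ℝ) (ht : 0 < t) :
    besselI p t = (t / 2) ^ p * besselS p (t ^ 2 / 4) := by
  rw [besselS_def, besselI, ← tsum_mul_left]
  apply tsum_congr
  intro k
  have h2 : (0:ℝ) < t / 2 := by positivity
  rw [Real.rpow_add h2, show (2 * (k:ℝ)) = ((2 * k : ℕ) : ℝ) by push_cast; ring,
    Real.rpow_natCast, pow_mul, show (t/2)^2 = t^2/4 by ring]
  ring

lemma besselI_pos (p : ℝ) (hp : 0 < p) (t : ℝ) (ht : 0 < t) : 0 < besselI p t := by
  rw [besselI_eq p t ht]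
  have h1 : (0:ℝ) < (t/2) ^ p := Real.rpow_pos_of_pos (by positivity) p
  have h2 := besselS_pos p hp (t^2/4) (by positivity)
  positivity

lemma besselI_hasDerivAt (p : ℝ) (hp : 0 < p) (t : ℝ) (ht : 0 < t) :
    HasDerivAt (fun s => besselI p s) (besselI (p + 1) t + p / t * besselI p t) t := by
  have h2 : (0:ℝ) < t / 2 := by positivity
  have hS := besselS_hasDerivAt p hp (t ^ 2 / 4)
  have h1 : HasDerivAt (fun s : ℝ => s ^ 2 / 4) (t / 2) t := by
    have := (hasDerivAt_pow 2 t).div_const 4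
    exact this.congr_deriv (by rw [show (2:ℕ) - 1 = 1 from rfl, pow_one]; push_cast; ring)
  have hcomp : HasDerivAt (fun s : ℝ => besselS p (s ^ 2 / 4)) (besselS (p + 1) (t ^ 2 / 4) * (t / 2)) t :=
    HasDerivAt.comp (h₂ := fun y => besselS p y) t hS h1
  have h3 : HasDerivAt (fun s : ℝ => (s / 2) ^ p) (p * (t / 2) ^ (p - 1) * (1 / 2)) t := by
    have hr := Real.hasDerivAt_rpow_const (x := t / 2) (p := p) (Or.inl h2.ne')
    have hd : HasDerivAt (fun s : ℝ => s / 2) (1 / 2) t := (hasDerivAt_id t).div_const 2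
    have := hr.comp t hd
    exact this
  have h4 := h3.mul hcomp
  have heq : (fun s => besselI p s) =ᶠ[nhds t] fun s => (s / 2) ^ p * besselS p (s ^ 2 / 4) :=
    eventually_of_mem (Ioi_mem_nhds ht) fun s hs => besselI_eq p s hs
  refine (h4.congr_of_eventuallyEq heq).congr_deriv ?_
  rw [besselI_eq p t ht, besselI_eq (p + 1) t ht,
    show p - 1 = p + (-1) by ring, Real.rpow_add h2, show p + 1 = p + 1 by rfl,
    Real.rpow_add h2 p 1, Real.rpow_one, Real.rpow_neg_one]
  field_simp
  ring

lemma besselS_rec (p x : ℝ) (hp1 : 0 < p - 1) :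
    besselS (p - 1) x = p * besselS p x + x * besselS (p + 1) x := by
  have hp : (0:ℝ) < p := by linarith
  -- pointwise identity for the difference
  have hptwise : ∀ k : ℕ,
      x ^ k / ((Nat.factorial k : ℝ) * Real.Gamma ((p - 1) + (k : ℝ) + 1))
      - p * (x ^ k / ((Nat.factorial k : ℝ) * Real.Gamma (p + (k : ℝ) + 1)))
      = (k : ℝ) * x ^ k / ((Nat.factorial k : ℝ) * Real.Gamma (p + (k : ℝ) + 1)) := by
    intro k
    have hpk : (0:ℝ) < p + (k:ℝ) := by positivity
    have hG : Real.Gamma (p + (k:ℝ) + 1) = (p + (k:ℝ)) * Real.Gamma (p + (k:ℝ)) := by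
      rw [show p + (k:ℝ) + 1 = (p + (k:ℝ)) + 1 by ring, Real.Gamma_add_one hpk.ne']
    have hG2 : ((p - 1) + (k : ℝ) + 1) = p + (k:ℝ) := by ring
    have hGpos : (0:ℝ) < Real.Gamma (p + (k:ℝ)) := Real.Gamma_pos_of_pos hpk
    have hk : (0:ℝ) < (Nat.factorial k : ℝ) := by positivity
    rw [hG2, hG]
    field_simp
    ring
  have hs1 := besselS_summable (p - 1) hp1 x
  have hs2 := (besselS_summable p hp x).mul_left p
  have hsk : Summable (fun k : ℕ => (k : ℝ) * x ^ k / ((Nat.factorial k : ℝ) * Real.Gamma (p + (k : ℝ) + 1))) := by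
    apply Summable.congr (hs1.sub hs2)
    intro k
    simpa using hptwise k
  have h1 : besselS (p - 1) x - p * besselS p x
      = ∑' k : ℕ, (k : ℝ) * x ^ k / ((Nat.factorial k : ℝ) * Real.Gamma (p + (k : ℝ) + 1)) := by
    rw [besselS_def (p-1) x, besselS_def p x, ← tsum_mul_left, ← hs1.tsum_sub hs2]
    exact tsum_congr hptwise
  have h2 : (∑' k : ℕ, (k : ℝ) * x ^ k / ((Nat.factorial k : ℝ) * Real.Gamma (p + (k : ℝ) + 1)))
      = x * besselS (p + 1) x := by
    rw [hsk.tsum_eq_zero_add]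
    simp only [Nat.cast_zero, zero_mul, zero_div, zero_add]
    rw [besselS_def (p+1) x, ← tsum_mul_left]
    apply tsum_congr
    intro n
    have h1' : ((Nat.factorial (n + 1) : ℕ) : ℝ) = ((n : ℝ) + 1) * (Nat.factorial n : ℝ) := by
      rw [Nat.factorial_succ]; push_cast; ring
    have h2' : (p + ((n + 1 : ℕ) : ℝ) + 1) = ((p + 1) + (n : ℝ) + 1) := by push_cast; ring
    have h3 : (0:ℝ) < Real.Gamma ((p+1) + (n:ℝ) + 1) := auxGammaPos (p+1) (by positivity) n
    have h4 : (0:ℝ) < (Nat.factorial n : ℝ) := by positivity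
    rw [h1', h2']
    push_cast
    field_simp
    ring
  linarith [h1, h2.symm]

lemma besselI_rec (p t : ℝ) (hp1 : 0 < p - 1) (ht : 0 < t) :
    besselI (p - 1) t = 2 * p / t * besselI p t + besselI (p + 1) t := by
  have hp : (0:ℝ) < p := by linarith
  have h2 : (0:ℝ) < t / 2 := by positivity
  rw [besselI_eq (p - 1) t ht, besselI_eq p t ht, besselI_eq (p + 1) t ht,
    besselS_rec p (t ^ 2 / 4) hp1,
    show p - 1 = p + (-1) by ring, Real.rpow_add h2, Real.rpow_neg_one,
    show p + 1 = p + 1 by rfl, Real.rpow_add h2 p 1, Real.rpow_one]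
  field_simp
  ring

variable {ν : ℝ}

lemma hB_deriv (hν : 3/2 ≤ ν) {t : ℝ} (ht : 0 < t) :
    HasDerivAt (fun s => besselI (ν - 1) s) (besselI ν t + (ν - 1) / t * besselI (ν - 1) t) t := by
  have h := besselI_hasDerivAt (ν - 1) (by linarith) t ht
  rwa [show ν - 1 + 1 = ν by ring] at h

lemma hA_deriv (hν : 3/2 ≤ ν) {t : ℝ} (ht : 0 < t) :
    HasDerivAt (fun s => besselI ν s) (besselI (ν - 1) t - ν / t * besselI ν t) t := by
  have h := besselI_hasDerivAt ν (by linarith) t ht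
  have hrec := besselI_rec ν t (by linarith) ht
  refine h.congr_deriv ?_
  have htne : t ≠ 0 := ht.ne'
  field_simp at hrec ⊢
  linarith [hrec]

lemma ratio_hasDerivAt (hν : 3/2 ≤ ν) {t : ℝ} (ht : 0 < t) :
    HasDerivAt (fun s => besselRatio ν s)
      (1 - (2 * ν - 1) / t * besselRatio ν t - besselRatio ν t ^ 2) t := by
  have hBpos := besselI_pos (ν - 1) (by linarith) t ht
  have h := (hA_deriv hν ht).div (hB_deriv hν ht) hBpos.ne'
  refine (h.congr_deriv ?_ : _)
  unfold besselRatio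
  field_simp
  ring

/-- the auxiliary function `g` -/
noncomputable def gAux (ν : ℝ) (s : ℝ) : ℝ :=
  s * besselI (ν - 1) s ^ 2 - (2 * ν - 1) * (besselI ν s * besselI (ν - 1) s)
    - s * besselI ν s ^ 2 - (2 * ν - 1) * (besselI (ν - 1) s ^ 2 / s)

lemma gAux_hasDerivAt (hν : 3/2 ≤ ν) {s : ℝ} (hs : 0 < s) :
    HasDerivAt (gAux ν)
      (-(2 * ν - 1) * (besselI ν s * besselI (ν - 1) s / s
        + (2 * ν - 3) * (besselI (ν - 1) s ^ 2 / s ^ 2))) s := by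
  have hA := hA_deriv hν hs
  have hB := hB_deriv hν hs
  have t1 := (hasDerivAt_id s).mul (hB.pow 2)
  have t2 := (hA.mul hB).const_mul (2 * ν - 1)
  have t3 := (hasDerivAt_id s).mul (hA.pow 2)
  have t4 := ((hB.pow 2).div (hasDerivAt_id s) hs.ne').const_mul (2 * ν - 1)
  have h := ((t1.sub t2).sub t3).sub t4
  refine (h.congr_of_eventuallyEq ?_).congr_deriv ?_
  · filter_upwards with y
    simp only [gAux, id, Pi.mul_apply, Pi.pow_apply, Pi.sub_apply, Pi.div_apply]
  · have hsne : s ≠ 0 := hs.ne'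
    simp only [id, Pi.mul_apply, Pi.pow_apply, Pi.sub_apply, Pi.div_apply]
    field_simp
    ring

lemma gAux_strictAnti (hν : 3/2 ≤ ν) : StrictAntiOn (gAux ν) (Ioi 0) := by
  apply strictAntiOn_of_deriv_neg (convex_Ioi 0)
  · intro s hs
    exact ((gAux_hasDerivAt hν hs).differentiableAt.continuousAt).continuousWithinAt
  · intro s hs
    rw [interior_Ioi] at hs
    have hs0 : (0:ℝ) < s := hs
    rw [(gAux_hasDerivAt hν hs).deriv]
    have h1 : 0 < besselI ν s := besselI_pos ν (by linarith) s hs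
    have h2 : 0 < besselI (ν - 1) s := besselI_pos (ν - 1) (by linarith) s hs
    have h3 : 0 < besselI ν s * besselI (ν - 1) s / s := by positivity
    have h4 : 0 ≤ (2 * ν - 3) * (besselI (ν - 1) s ^ 2 / s ^ 2) := by
      apply mul_nonneg (by linarith)
      positivity
    nlinarith

lemma gAux_eq (hν : 3/2 ≤ ν) {s : ℝ} (hs : 0 < s) :
    gAux ν s = s * besselI (ν - 1) s ^ 2 *
      (1 - (2 * ν - 1) / s * besselRatio ν s - besselRatio ν s ^ 2 - (2 * ν - 1) / s ^ 2) := by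
  have h2 : 0 < besselI (ν - 1) s := besselI_pos (ν - 1) (by linarith) s hs
  unfold gAux besselRatio
  field_simp

lemma hfun_neg_small (hν : 3/2 ≤ ν) {s : ℝ} (hs : 0 < s) (hs1 : s ≤ 1) :
    1 - (2 * ν - 1) / s * besselRatio ν s - besselRatio ν s ^ 2 - (2 * ν - 1) / s ^ 2 < 0 := by
  have h1 : 0 < besselI ν s := besselI_pos ν (by linarith) s hs
  have h2 : 0 < besselI (ν - 1) s := besselI_pos (ν - 1) (by linarith) s hs
  have hr : 0 < besselRatio ν s := div_pos h1 h2
  have hν2 : (2:ℝ) ≤ 2 * ν - 1 := by linarith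
  have hs2 : s ^ 2 ≤ 1 := by nlinarith
  have h3 : (2:ℝ) ≤ (2 * ν - 1) / s ^ 2 := by
    rw [le_div_iff₀ (by positivity)]
    nlinarith
  have h4 : 0 < (2 * ν - 1) / s * besselRatio ν s := by
    apply mul_pos (by positivity) hr
  nlinarith [sq_nonneg (besselRatio ν s)]

lemma hfun_neg (hν : 3/2 ≤ ν) {t : ℝ} (ht : 0 < t) :
    1 - (2 * ν - 1) / t * besselRatio ν t - besselRatio ν t ^ 2 - (2 * ν - 1) / t ^ 2 < 0 := by
  rcases le_or_gt t 1 with h | h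
  · exact hfun_neg_small hν ht h
  · have hg1 : gAux ν t < gAux ν 1 := gAux_strictAnti hν (mem_Ioi.mpr one_pos) (mem_Ioi.mpr ht) h
    have hg2 : gAux ν 1 < 0 := by
      rw [gAux_eq hν one_pos]
      have h2 : 0 < besselI (ν - 1) 1 := besselI_pos (ν - 1) (by linarith) 1 one_pos
      exact mul_neg_of_pos_of_neg (by positivity) (hfun_neg_small hν one_pos le_rfl)
    have hgt : gAux ν t < 0 := hg1.trans hg2
    rw [gAux_eq hν ht] at hgt
    have h2 : 0 < besselI (ν - 1) t := besselI_pos (ν - 1) (by linarith) t ht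
    by_contra hcon
    push_neg at hcon
    have : 0 ≤ t * besselI (ν - 1) t ^ 2 *
        (1 - (2 * ν - 1) / t * besselRatio ν t - besselRatio ν t ^ 2 - (2 * ν - 1) / t ^ 2) :=
      mul_nonneg (by positivity) hcon
    linarith

noncomputable def GAux (ν a t : ℝ) : ℝ :=
  ν * Real.log t - (ν - 1) * Real.log a - (t ^ 2 + a ^ 2) / 2
    + Real.log (besselI (ν - 1) (a * t))

noncomputable def phiAux (ν a s : ℝ) : ℝ :=
  ν * s⁻¹ - s + (a * besselRatio ν (a * s) + (ν - 1) * s⁻¹)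

variable {ν a : ℝ}

lemma scale_hasDerivAt (a t : ℝ) : HasDerivAt (fun s : ℝ => a * s) a t := by
  simpa using (hasDerivAt_id t).const_mul a

lemma GAux_hasDerivAt (hν : 3/2 ≤ ν) (ha : 0 < a) {t : ℝ} (ht : 0 < t) :
    HasDerivAt (GAux ν a) (phiAux ν a t) t := by
  have hat : 0 < a * t := mul_pos ha ht
  have hBpos := besselI_pos (ν - 1) (by linarith) (a * t) hat
  have p1 : HasDerivAt (fun s : ℝ => ν * Real.log s) (ν * t⁻¹) t :=
    (Real.hasDerivAt_log ht.ne').const_mul ν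
  have p2 : HasDerivAt (fun _ : ℝ => (ν - 1) * Real.log a) 0 t := hasDerivAt_const t _
  have p3 : HasDerivAt (fun s : ℝ => (s ^ 2 + a ^ 2) / 2) t t := by
    have := ((hasDerivAt_pow 2 t).add_const (a ^ 2)).div_const 2
    exact this.congr_deriv (by rw [show (2:ℕ) - 1 = 1 from rfl, pow_one]; push_cast; ring)
  have p5 : HasDerivAt (fun s : ℝ => besselI (ν - 1) (a * s))
      ((besselI ν (a * t) + (ν - 1) / (a * t) * besselI (ν - 1) (a * t)) * a) t :=
    (hB_deriv hν hat).comp t (scale_hasDerivAt a t)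
  have p6 : HasDerivAt (fun s : ℝ => Real.log (besselI (ν - 1) (a * s)))
      ((besselI (ν - 1) (a * t))⁻¹ * ((besselI ν (a * t) + (ν - 1) / (a * t) * besselI (ν - 1) (a * t)) * a)) t :=
    HasDerivAt.comp (h₂ := Real.log) t (Real.hasDerivAt_log hBpos.ne') p5
  have h := ((p1.sub p2).sub p3).add p6
  refine (h.congr_of_eventuallyEq ?_).congr_deriv ?_
  · filter_upwards with y; simp only [GAux, Pi.add_apply, Pi.sub_apply]
  · unfold phiAux besselRatio
    have hBne : besselI (ν - 1) (a * t) ≠ 0 := hBpos.ne'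
    have htne : t ≠ 0 := ht.ne'
    have hane : a ≠ 0 := ha.ne'
    generalize besselI (ν - 1) (a * t) = B at hBne ⊢
    field_simp
    ring

lemma phiAux_hasDerivAt (hν : 3/2 ≤ ν) (ha : 0 < a) {t : ℝ} (ht : 0 < t) :
    HasDerivAt (phiAux ν a)
      (ν * (-(t ^ 2)⁻¹) - 1 + (a * ((1 - (2 * ν - 1) / (a * t) * besselRatio ν (a * t)
        - besselRatio ν (a * t) ^ 2) * a) + (ν - 1) * (-(t ^ 2)⁻¹))) t := by
  have hat : 0 < a * t := mul_pos ha ht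
  have q1 : HasDerivAt (fun s : ℝ => ν * s⁻¹) (ν * (-(t ^ 2)⁻¹)) t :=
    (hasDerivAt_inv ht.ne').const_mul ν
  have q2 : HasDerivAt (fun s : ℝ => s) 1 t := hasDerivAt_id t
  have q3 : HasDerivAt (fun s : ℝ => a * besselRatio ν (a * s))
      (a * ((1 - (2 * ν - 1) / (a * t) * besselRatio ν (a * t) - besselRatio ν (a * t) ^ 2) * a)) t :=
    ((ratio_hasDerivAt hν hat).comp t (scale_hasDerivAt a t)).const_mul a
  have q4 : HasDerivAt (fun s : ℝ => (ν - 1) * s⁻¹) ((ν - 1) * (-(t ^ 2)⁻¹)) t :=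
    (hasDerivAt_inv ht.ne').const_mul (ν - 1)
  exact ((q1.sub q2).add (q3.add q4))

lemma phiAux_deriv_neg (hν : 3/2 ≤ ν) (ha : 0 < a) {t : ℝ} (ht : 0 < t) :
    ν * (-(t ^ 2)⁻¹) - 1 + (a * ((1 - (2 * ν - 1) / (a * t) * besselRatio ν (a * t)
        - besselRatio ν (a * t) ^ 2) * a) + (ν - 1) * (-(t ^ 2)⁻¹)) < 0 := by
  have hat : 0 < a * t := mul_pos ha ht
  have hD := hfun_neg hν hat
  set D := 1 - (2 * ν - 1) / (a * t) * besselRatio ν (a * t) - besselRatio ν (a * t) ^ 2 with hDdef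
  have hDlt : D < (2 * ν - 1) / (a * t) ^ 2 := by linarith
  have h1 : a * (D * a) = a ^ 2 * D := by ring
  have h2 : a ^ 2 * D < a ^ 2 * ((2 * ν - 1) / (a * t) ^ 2) :=
    mul_lt_mul_of_pos_left hDlt (by positivity)
  have h3 : a ^ 2 * ((2 * ν - 1) / (a * t) ^ 2) = (2 * ν - 1) * (t ^ 2)⁻¹ := by
    field_simp
  nlinarith [h2, inv_pos.mpr (pow_pos ht 2)]

lemma GAux_strictConcave (hν : 3/2 ≤ ν) (ha : 0 < a) :
    StrictConcaveOn ℝ (Ioi (0:ℝ)) (GAux ν a) := by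
  apply strictConcaveOn_of_deriv2_neg (convex_Ioi 0)
  · intro t ht
    exact ((GAux_hasDerivAt hν ha ht).differentiableAt.continuousAt).continuousWithinAt
  · intro x hx
    rw [interior_Ioi] at hx
    have hx0 : (0:ℝ) < x := hx
    have h2 : deriv^[2] (GAux ν a) x = deriv (deriv (GAux ν a)) x := by
      simp [Function.iterate_succ_apply']
    rw [h2]
    have hEq : Set.EqOn (deriv (GAux ν a)) (phiAux ν a) (Ioi 0) :=
      fun s hs => (GAux_hasDerivAt hν ha hs).deriv
    have h3 : deriv (deriv (GAux ν a)) x = deriv (phiAux ν a) x :=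
      Filter.EventuallyEq.deriv_eq (eventually_of_mem (Ioi_mem_nhds hx0) hEq)
    rw [h3, (phiAux_hasDerivAt hν ha hx0).deriv]
    exact phiAux_deriv_neg hν ha hx0


/-- for `ν ≥ 3/2`, `h_ν(t) = r'_ν(t) - (2ν-1)/t² ≤ 0` for all `t > 0`;
consequently, for every `a ≥ 0` the noncentral chi density is log-concave on `(0, ∞)`. -/
theorem h_nonpos_and_logConcave_of_nu_ge (ν : ℝ) (hν : 3 / 2 ≤ ν) :
    (∀ t : ℝ, 0 < t →
      deriv (fun s : ℝ => besselRatio ν s) t - (2 * ν - 1) / t ^ 2 ≤ 0) ∧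
    (∀ a : ℝ, 0 ≤ a →
      ConcaveOn ℝ (Set.Ioi 0) (fun t : ℝ => Real.log
        (t ^ ν / a ^ (ν - 1) * Real.exp (-(t ^ 2 + a ^ 2) / 2) * besselI (ν - 1) (a * t)))) := by
  have hν' : (3:ℝ)/2 ≤ ν := hν
  constructor
  · intro t ht
    rw [(ratio_hasDerivAt hν' ht).deriv]
    linarith [hfun_neg hν' ht]
  · intro a ha
    rcases eq_or_lt_of_le ha with rfl | hapos
    · have hfun : (fun t : ℝ => Real.log
          (t ^ ν / (0:ℝ) ^ (ν - 1) * Real.exp (-(t ^ 2 + (0:ℝ) ^ 2) / 2)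
            * besselI (ν - 1) ((0:ℝ) * t))) = fun _ => (0:ℝ) := by
        funext t
        rw [Real.zero_rpow (by intro h; rw [sub_eq_zero] at h; linarith : ν - 1 ≠ 0),
          div_zero, zero_mul, zero_mul, Real.log_zero]
      rw [hfun]
      exact concaveOn_const 0 (convex_Ioi 0)
    · apply ((GAux_strictConcave hν' hapos).concaveOn).congr
      intro t ht
      have ht0 : (0:ℝ) < t := ht
      have hat : 0 < a * t := mul_pos hapos ht0
      have hBpos := besselI_pos (ν - 1) (by linarith) (a * t) hat
      have h1 : (0:ℝ) < t ^ ν := Real.rpow_pos_of_pos ht0 ν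
      have h2 : (0:ℝ) < a ^ (ν - 1) := Real.rpow_pos_of_pos hapos (ν - 1)
      have h3 : Real.exp (-(t ^ 2 + a ^ 2) / 2) ≠ 0 := Real.exp_ne_zero _
      show GAux ν a t = Real.log
        (t ^ ν / a ^ (ν - 1) * Real.exp (-(t ^ 2 + a ^ 2) / 2) * besselI (ν - 1) (a * t))
      rw [Real.log_mul (by positivity) hBpos.ne',
        Real.log_mul (by positivity) h3,
        Real.log_div h1.ne' h2.ne',
        Real.log_rpow ht0, Real.log_rpow hapos, Real.log_exp]
      unfold GAux
      ring
end

section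
/- For 0 < ν < 1/2, the function b ↦ Q_ν(0, b) = 1 - (1/(2^ν Γ(ν))) ∫_0^{b²} t^{ν-1} e^{-t/2} dt is not log-concave on [0, ∞); indeed log Q_ν(0,b) = -C b^{2ν} + o(b^{2ν}) as b ↓ 0 with C = 2^{-ν}/Γ(ν+1), and b ↦ -b^{2ν} is strictly convex near 0 for ν < 1/2. -/
open Real Set Filter MeasureTheory Topology

lemma aux_bounds (ν : ℝ) (hν0 : 0 < ν) (x : ℝ) (hx : 0 < x) :
    Real.exp (-x/2) * (x ^ ν / ν) ≤ (∫ t in (0:ℝ)..x, t ^ (ν - 1) * Real.exp (-t / 2)) ∧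
    (∫ t in (0:ℝ)..x, t ^ (ν - 1) * Real.exp (-t / 2)) ≤ x ^ ν / ν := by
  have hint0 : IntervalIntegrable (fun t : ℝ => t ^ (ν - 1)) volume 0 x :=
    intervalIntegral.intervalIntegrable_rpow' (by linarith)
  have hint : IntervalIntegrable (fun t : ℝ => t ^ (ν - 1) * Real.exp (-t / 2)) volume 0 x :=
    hint0.mul_continuousOn (Continuous.continuousOn (by continuity))
  have hint2 : IntervalIntegrable (fun t : ℝ => t ^ (ν - 1) * Real.exp (-x / 2)) volume 0 x :=
    hint0.mul_const _
  have hval : (∫ t in (0:ℝ)..x, t ^ (ν - 1)) = x ^ ν / ν := by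
    rw [integral_rpow (Or.inl (by linarith))]
    rw [Real.zero_rpow (by linarith : ν - 1 + 1 ≠ 0)]
    ring_nf
  constructor
  · have h1 : (∫ t in (0:ℝ)..x, t ^ (ν - 1) * Real.exp (-x / 2)) ≤
        ∫ t in (0:ℝ)..x, t ^ (ν - 1) * Real.exp (-t / 2) := by
      apply intervalIntegral.integral_mono_on hx.le hint2 hint
      intro t ht
      have ht0 : (0:ℝ) ≤ t ^ (ν - 1) := Real.rpow_nonneg ht.1 _
      exact mul_le_mul_of_nonneg_left (Real.exp_le_exp.2 (by linarith [ht.2])) ht0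
    calc Real.exp (-x/2) * (x ^ ν / ν)
        = ∫ t in (0:ℝ)..x, t ^ (ν - 1) * Real.exp (-x / 2) := by
          rw [intervalIntegral.integral_mul_const, hval]; ring
      _ ≤ _ := h1
  · calc (∫ t in (0:ℝ)..x, t ^ (ν - 1) * Real.exp (-t / 2))
        ≤ ∫ t in (0:ℝ)..x, t ^ (ν - 1) := by
          apply intervalIntegral.integral_mono_on hx.le hint hint0
          intro t ht
          have ht0 : (0:ℝ) ≤ t ^ (ν - 1) := Real.rpow_nonneg ht.1 _
          nth_rewrite 2 [show t ^ (ν - 1) = t ^ (ν - 1) * 1 by ring]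
          exact mul_le_mul_of_nonneg_left (Real.exp_le_one_iff.2 (by linarith [ht.1])) ht0
      _ = x ^ ν / ν := hval

/-- for `0 < ν < 1/2`, `b ↦ Q_ν(0,b) = 1 - (1/(2^ν Γ(ν))) ∫₀^{b²} t^{ν-1} e^{-t/2} dt`
is not log-concave on `[0, ∞)`; indeed `log Q_ν(0,b) = -C b^{2ν} + o(b^{2ν})` as `b ↓ 0`
with `C = 2^{-ν}/Γ(ν+1)`, and `b ↦ -b^{2ν}` is strictly convex near `0` for `ν < 1/2`. -/
theorem marcumQ_zero_not_logConcave (ν : ℝ) (hν0 : 0 < ν) (hν : ν < 1 / 2)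
    (Q : ℝ → ℝ)
    (hQ : ∀ b : ℝ, Q b = 1 - (1 / ((2 : ℝ) ^ ν * Real.Gamma ν)) *
      ∫ t in (0:ℝ)..(b ^ 2), t ^ (ν - 1) * Real.exp (-t / 2)) :
    ¬ ConcaveOn ℝ (Set.Ici 0) (fun b => Real.log (Q b)) ∧
    (fun b : ℝ => Real.log (Q b) + (2 : ℝ) ^ (-ν) / Real.Gamma (ν + 1) * b ^ (2 * ν))
      =o[nhdsWithin 0 (Set.Ioi 0)] (fun b : ℝ => b ^ (2 * ν)) ∧
    (∃ ε : ℝ, 0 < ε ∧ StrictConvexOn ℝ (Set.Ioo 0 ε) (fun b : ℝ => -(b ^ (2 * ν)))) := by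
  set p := 2 * ν with hp
  have hp0 : 0 < p := by positivity
  have hp1 : p < 1 := by rw [hp]; linarith
  set C : ℝ := (2:ℝ) ^ (-ν) / Real.Gamma (ν + 1) with hC
  have hΓ : 0 < Real.Gamma ν := Real.Gamma_pos_of_pos hν0
  have hΓ1 : Real.Gamma (ν + 1) = ν * Real.Gamma ν := Real.Gamma_add_one hν0.ne'
  have h2ν : (0:ℝ) < (2:ℝ) ^ ν := Real.rpow_pos_of_pos two_pos ν
  have h2ν' : (0:ℝ) < (2:ℝ) ^ (-ν) := Real.rpow_pos_of_pos two_pos (-ν)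
  have hCpos : 0 < C := by rw [hC, hΓ1]; positivity
  set c : ℝ := 1 / ((2:ℝ) ^ ν * Real.Gamma ν) with hc
  have hcpos : 0 < c := by rw [hc]; positivity
  have hCc : C = c / ν := by
    rw [hC, hΓ1, hc, Real.rpow_neg (by norm_num : (0:ℝ) ≤ 2)]
    field_simp
  set u : ℝ → ℝ := fun b => c * ∫ t in (0:ℝ)..(b^2), t ^ (ν - 1) * Real.exp (-t/2) with hu
  have hQu : ∀ b, Q b = 1 - u b := fun b => hQ b
  have hbsq : ∀ b : ℝ, 0 < b → ((b^2 : ℝ)) ^ ν = b ^ p := by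
    intro b hb
    rw [← Real.rpow_natCast b 2, ← Real.rpow_mul hb.le]
    norm_num [hp]
  have hub : ∀ b : ℝ, 0 < b → u b ≤ C * b ^ p := by
    intro b hb
    have h := (aux_bounds ν hν0 (b^2) (by positivity)).2
    have := mul_le_mul_of_nonneg_left h hcpos.le
    calc u b ≤ c * ((b^2) ^ ν / ν) := this
      _ = C * b ^ p := by rw [hbsq b hb, hCc]; ring
  have hlb : ∀ b : ℝ, 0 < b → C * b ^ p * Real.exp (-(b^2)/2) ≤ u b := by
    intro b hb
    have h := (aux_bounds ν hν0 (b^2) (by positivity)).1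
    have := mul_le_mul_of_nonneg_left h hcpos.le
    calc C * b ^ p * Real.exp (-(b^2)/2)
        = c * (Real.exp (-(b^2)/2) * ((b^2) ^ ν / ν)) := by rw [hbsq b hb, hCc]; ring
      _ ≤ u b := this
  have h0p : (0:ℝ) ^ p = 0 := Real.zero_rpow hp0.ne'
  have h_bp : Tendsto (fun b : ℝ => b ^ p) (𝓝[>] (0:ℝ)) (𝓝 0) := by
    have h := (Real.continuousAt_rpow_const 0 p (Or.inr hp0.le)).tendsto
    rw [h0p] at h
    exact h.mono_left nhdsWithin_le_nhds
  have h_exp : Tendsto (fun b : ℝ => Real.exp (-(b^2)/2)) (𝓝[>] (0:ℝ)) (𝓝 1) := by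
    have hcont : Continuous fun b : ℝ => Real.exp (-(b^2)/2) := by continuity
    have h := hcont.tendsto 0
    norm_num at h
    exact h.mono_left nhdsWithin_le_nhds
  have h1 : Tendsto (fun b => u b / b ^ p) (𝓝[>] (0:ℝ)) (𝓝 C) := by
    have hCe : Tendsto (fun b : ℝ => C * Real.exp (-(b^2)/2)) (𝓝[>] (0:ℝ)) (𝓝 C) := by
      simpa using h_exp.const_mul C
    apply tendsto_of_tendsto_of_tendsto_of_le_of_le' hCe tendsto_const_nhds
    · filter_upwards [eventually_mem_nhdsWithin] with b hb
      have hbp : 0 < b ^ p := Real.rpow_pos_of_pos hb p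
      rw [le_div_iff₀ hbp]
      calc C * Real.exp (-(b^2)/2) * b ^ p = C * b ^ p * Real.exp (-(b^2)/2) := by ring
        _ ≤ u b := hlb b hb
    · filter_upwards [eventually_mem_nhdsWithin] with b hb
      have hbp : 0 < b ^ p := Real.rpow_pos_of_pos hb p
      rw [div_le_iff₀ hbp]
      exact hub b hb
  have h_upos : ∀ᶠ b in 𝓝[>] (0:ℝ), 0 < u b := by
    filter_upwards [eventually_mem_nhdsWithin] with b hb
    have : 0 < C * b ^ p * Real.exp (-(b^2)/2) := by
      have := Real.rpow_pos_of_pos hb p; positivity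
    exact lt_of_lt_of_le this (hlb b hb)
  have h_u0 : Tendsto u (𝓝[>] (0:ℝ)) (𝓝 0) := by
    have h := h1.mul h_bp
    rw [mul_zero] at h
    apply h.congr'
    filter_upwards [eventually_mem_nhdsWithin] with b hb
    exact div_mul_cancel₀ _ (Real.rpow_pos_of_pos hb p).ne'
  have h2 : Tendsto u (𝓝[>] (0:ℝ)) (𝓝[≠] (0:ℝ)) := by
    rw [tendsto_nhdsWithin_iff]
    refine ⟨h_u0, ?_⟩
    filter_upwards [h_upos] with b hb
    simp [hb.ne']
  have h3 : Tendsto (fun v : ℝ => Real.log (1 - v) / v) (𝓝[≠] (0:ℝ)) (𝓝 (-1)) := by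
    have hd : HasDerivAt (fun v : ℝ => Real.log (1 - v)) (-1) 0 := by
      have h' : HasDerivAt (fun v : ℝ => 1 - v) (-1) 0 := by
        simpa using (hasDerivAt_id (0:ℝ)).const_sub 1
      have := h'.log (by norm_num)
      simpa using this
    have h := hasDerivAt_iff_tendsto_slope.mp hd
    refine h.congr fun v => ?_
    simp [slope_def_field]
  have h4 : Tendsto (fun b => Real.log (1 - u b) / u b) (𝓝[>] (0:ℝ)) (𝓝 (-1)) := h3.comp h2
  have h5 : Tendsto (fun b => Real.log (Q b) / b ^ p) (𝓝[>] (0:ℝ)) (𝓝 (-C)) := by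
    have h := h4.mul h1
    rw [neg_one_mul] at h
    apply h.congr'
    filter_upwards [h_upos] with b hb
    rw [hQu b, div_mul_div_comm, mul_comm (u b) (b ^ p), mul_div_mul_right _ _ hb.ne']
  refine ⟨?_, ?_, ?_⟩
  · intro hcon
    have hQ0 : Q 0 = 1 := by
      rw [hQ 0]; norm_num
    have hf0 : Real.log (Q 0) = 0 := by rw [hQ0, Real.log_one]
    have key : ∀ b : ℝ, b ∈ Ioo (0:ℝ) 1 →
        Real.log (Q 1) * b ^ (1 - p) ≤ Real.log (Q b) / b ^ p := by
      intro b hb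
      have h := hcon.2 (mem_Ici.2 zero_le_one) (mem_Ici.2 le_rfl)
        hb.1.le (by linarith [hb.2] : (0:ℝ) ≤ 1 - b) (by ring)
      simp only [smul_eq_mul, mul_one, mul_zero, add_zero, hf0] at h
      have hbp : 0 < b ^ p := Real.rpow_pos_of_pos hb.1 p
      rw [le_div_iff₀ hbp]
      have hpow : b ^ (1 - p) * b ^ p = b := by
        rw [← Real.rpow_add hb.1]
        norm_num
      calc Real.log (Q 1) * b ^ (1 - p) * b ^ p = b * Real.log (Q 1) := by
            rw [mul_assoc, hpow]; ring
        _ ≤ Real.log (Q b) := h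
    have hlim0 : Tendsto (fun b : ℝ => Real.log (Q 1) * b ^ (1 - p)) (𝓝[>] (0:ℝ)) (𝓝 0) := by
      have h := (Real.continuousAt_rpow_const 0 (1 - p) (Or.inr (by linarith))).tendsto
      rw [Real.zero_rpow (by linarith : (1:ℝ) - p ≠ 0)] at h
      have h' : Tendsto (fun b : ℝ => b ^ (1 - p)) (𝓝[>] (0:ℝ)) (𝓝 0) :=
        h.mono_left nhdsWithin_le_nhds
      simpa using h'.const_mul (Real.log (Q 1))
    have hle : (0:ℝ) ≤ -C := by
      refine le_of_tendsto_of_tendsto hlim0 h5 ?_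
      filter_upwards [Ioo_mem_nhdsGT_of_mem (by norm_num : (0:ℝ) ∈ Ico (0:ℝ) 1)] with b hb
      exact key b hb
    linarith
  · have hgf : ∀ᶠ b in 𝓝[>] (0:ℝ), b ^ p = 0 → Real.log (Q b) + C * b ^ p = 0 := by
      filter_upwards [eventually_mem_nhdsWithin] with b hb h0
      exact absurd h0 (Real.rpow_pos_of_pos hb p).ne'
    rw [Asymptotics.isLittleO_iff_tendsto' hgf]
    have h := h5.add_const C
    rw [neg_add_cancel] at h
    apply h.congr'
    filter_upwards [eventually_mem_nhdsWithin] with b hb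
    have hbp : b ^ p ≠ 0 := (Real.rpow_pos_of_pos hb p).ne'
    rw [add_div, mul_div_assoc, div_self hbp, mul_one]
  · refine ⟨1, one_pos, ?_⟩
    have h := (Real.strictConcaveOn_rpow hp0 hp1).neg
    exact h.subset (fun x hx => le_of_lt hx.1) (convex_Ioo 0 1)
end

section
/- The probability density function of a Rice distribution with parameters a ≥ 0 and unit scale, f(t) = t exp(-(t²+a²)/2) I₀(at) for t > 0, is log-concave on (0, ∞). -/
open Real Set Filter MeasureTheory

namespace RiceAux

open Finset Finset.Nat


noncomputable def bb (k : ℕ) : ℝ := ((4:ℝ)^k * (k.factorial:ℝ)^2)⁻¹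

lemma bb_pos (k : ℕ) : 0 < bb k := by
  have := k.factorial_pos
  have h2 : (0:ℝ) < (k.factorial:ℝ) := by exact_mod_cast this
  rw [bb]; positivity

lemma bb_nonneg (k : ℕ) : 0 ≤ bb k := (bb_pos k).le

lemma bb_zero : bb 0 = 1 := by simp [bb]

lemma bb_succ (k : ℕ) : bb k = 4 * ((k:ℝ)+1)^2 * bb (k+1) := by
  have hf : (k.factorial : ℝ) ≠ 0 := Nat.cast_ne_zero.2 k.factorial_ne_zero
  have h4 : ((4:ℝ)^k) ≠ 0 := by positivity
  rw [bb, bb, Nat.factorial_succ, pow_succ]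
  push_cast
  field_simp
  ring

lemma bb_mul {i j N : ℕ} (h : i + j = N) :
    bb i * bb j = ((N.choose i * N.choose j : ℕ) : ℝ) / (4^N * (N.factorial:ℝ)^2) := by
  subst h
  have e1 : ((i+j).choose i : ℝ) * i.factorial * j.factorial = (i+j).factorial := by
    exact_mod_cast congrArg (Nat.cast (R := ℝ))
      (by simpa using Nat.choose_mul_factorial_mul_factorial (Nat.le_add_right i j))
  have e2 : (i+j).choose j = (i+j).choose i := (Nat.choose_symm_of_eq_add (by omega))
  have hif : (i.factorial : ℝ) ≠ 0 := Nat.cast_ne_zero.2 i.factorial_ne_zero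
  have hjf : (j.factorial : ℝ) ≠ 0 := Nat.cast_ne_zero.2 j.factorial_ne_zero
  have hNf : (((i+j).factorial) : ℝ) ≠ 0 := Nat.cast_ne_zero.2 (i+j).factorial_ne_zero
  have h4N : (4:ℝ)^i * (4:ℝ)^j = (4:ℝ)^(i+j) := by rw [← pow_add]
  rw [bb, bb, e2]
  push_cast
  rw [show ((i+j).choose i : ℝ) = (i+j).factorial / (i.factorial * j.factorial) by
    field_simp; linarith [e1]]
  have h4i : ((4:ℝ)^i) ≠ 0 := by positivity
  have h4j : ((4:ℝ)^j) ≠ 0 := by positivity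
  field_simp
  rw [← h4N]

noncomputable def aa1 (k : ℕ) : ℝ := ((k:ℝ)+1) * bb (k+1)
noncomputable def C2 (n : ℕ) : ℝ := ∑ p ∈ antidiagonal n, bb p.1 * bb p.2
noncomputable def CM (n : ℕ) : ℝ := ∑ p ∈ antidiagonal n, bb p.1 * aa1 p.2
noncomputable def C1 (n : ℕ) : ℝ := ∑ p ∈ antidiagonal n, aa1 p.1 * aa1 p.2
noncomputable def DD (n : ℕ) : ℝ :=
  ∑ p ∈ antidiagonal n, (p.1:ℝ) * (p.2:ℝ) * (bb p.1 * bb p.2)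

lemma idM (n : ℕ) : 2 * CM n = ((n:ℝ)+1) * C2 (n+1) := by
  have hW : CM n = ∑ p ∈ antidiagonal (n+1), (p.2:ℝ) * (bb p.1 * bb p.2) := by
    rw [sum_antidiagonal_succ' (f := fun p => (p.2:ℝ) * (bb p.1 * bb p.2))]
    show CM n = (((0:ℕ)):ℝ) * (bb (n+1) * bb 0) + _
    rw [Nat.cast_zero, zero_mul, zero_add]
    unfold CM aa1
    exact Finset.sum_congr rfl fun p _ => by push_cast; ring
  have hswap : CM n = ∑ p ∈ antidiagonal (n+1), (p.1:ℝ) * (bb p.1 * bb p.2) := by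
    rw [hW, ← sum_antidiagonal_swap (f := fun p => (p.1:ℝ) * (bb p.1 * bb p.2))]
    exact Finset.sum_congr rfl fun p _ => by
      show (p.2:ℝ) * (bb p.1 * bb p.2) = ((p.swap).1:ℝ) * (bb (p.swap).1 * bb (p.swap).2)
      rw [Prod.fst_swap, Prod.snd_swap]; ring
  have hsum : (∑ p ∈ antidiagonal (n+1), ((p.1:ℝ)+(p.2:ℝ)) * (bb p.1 * bb p.2))
      = ((n:ℝ)+1) * C2 (n+1) := by
    unfold C2
    rw [Finset.mul_sum]
    refine Finset.sum_congr rfl fun p hp => ?_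
    have h := Finset.HasAntidiagonal.mem_antidiagonal.1 hp
    have hc : (p.1:ℝ) + (p.2:ℝ) = (n:ℝ)+1 := by exact_mod_cast congrArg (Nat.cast (R:=ℝ)) h
    rw [hc]
  calc 2 * CM n
      = (∑ p ∈ antidiagonal (n+1), (p.1:ℝ) * (bb p.1 * bb p.2))
        + ∑ p ∈ antidiagonal (n+1), (p.2:ℝ) * (bb p.1 * bb p.2) := by
        rw [← hW, ← hswap]; ring
    _ = ∑ p ∈ antidiagonal (n+1), ((p.1:ℝ)+(p.2:ℝ)) * (bb p.1 * bb p.2) := by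
        rw [← Finset.sum_add_distrib]
        exact Finset.sum_congr rfl fun p _ => by ring
    _ = ((n:ℝ)+1) * C2 (n+1) := hsum

lemma strip (F : ℕ × ℕ → ℝ) (k : ℕ) (h1 : ∀ j, F (0, j) = 0) (h2 : ∀ i, F (i, 0) = 0) :
    ∑ p ∈ antidiagonal (k+2), F p = ∑ p ∈ antidiagonal k, F (p.1+1, p.2+1) := by
  rw [sum_antidiagonal_succ (n := k+1), h1, zero_add,
    sum_antidiagonal_succ' (f := fun p => F (p.1+1, p.2)), h2, zero_add]

lemma idP (k : ℕ) : C1 k = DD (k+2) := by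
  unfold C1 DD
  rw [strip (fun p => (p.1:ℝ) * (p.2:ℝ) * (bb p.1 * bb p.2)) k (by simp) (by simp)]
  refine Finset.sum_congr rfl fun p _ => ?_
  unfold aa1
  push_cast
  ring

lemma vand (N m : ℕ) :
    ∑ p ∈ antidiagonal m, (N.choose p.1 * N.choose p.2) = (N+N).choose m :=
  (Nat.add_choose_eq N N m).symm

lemma C2_eq (N : ℕ) : C2 N = (((N+N).choose N : ℕ) : ℝ) / (4^N * (N.factorial:ℝ)^2) := by
  unfold C2
  rw [← vand N N, Nat.cast_sum, Finset.sum_div]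
  exact Finset.sum_congr rfl fun p hp => bb_mul (Finset.HasAntidiagonal.mem_antidiagonal.1 hp)

lemma DD_eq (k : ℕ) : DD (k+2) =
    ((k:ℝ)+2)^2 * (((k+1+(k+1)).choose k : ℕ) : ℝ) / (4^(k+2) * ((k+2).factorial:ℝ)^2) := by
  rw [← idP]
  unfold C1 aa1
  rw [← vand (k+1) k, Nat.cast_sum, Finset.mul_sum, Finset.sum_div]
  refine Finset.sum_congr rfl fun p hp => ?_
  have hp' : p.1 + p.2 = k := Finset.HasAntidiagonal.mem_antidiagonal.1 hp
  have e1 : (p.1+1) * ((k+2).choose (p.1+1)) = (k+2) * ((k+1).choose p.1) := by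
    calc (p.1+1) * ((k+2).choose (p.1+1)) = (k+1+1).choose (p.1+1) * (p.1+1) := mul_comm _ _
      _ = (k+1).succ * (k+1).choose p.1 := (Nat.add_one_mul_choose_eq (k+1) p.1).symm
      _ = (k+2) * ((k+1).choose p.1) := rfl
  have e2 : (p.2+1) * ((k+2).choose (p.2+1)) = (k+2) * ((k+1).choose p.2) := by
    calc (p.2+1) * ((k+2).choose (p.2+1)) = (k+1+1).choose (p.2+1) * (p.2+1) := mul_comm _ _
      _ = (k+1).succ * (k+1).choose p.2 := (Nat.add_one_mul_choose_eq (k+1) p.2).symm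
      _ = (k+2) * ((k+1).choose p.2) := rfl
  have e1R : ((p.1:ℝ)+1) * (((k+2).choose (p.1+1) : ℕ) : ℝ)
      = ((k:ℝ)+2) * (((k+1).choose p.1 : ℕ) : ℝ) := by exact_mod_cast congrArg (Nat.cast (R:=ℝ)) e1
  have e2R : ((p.2:ℝ)+1) * (((k+2).choose (p.2+1) : ℕ) : ℝ)
      = ((k:ℝ)+2) * (((k+1).choose p.2 : ℕ) : ℝ) := by exact_mod_cast congrArg (Nat.cast (R:=ℝ)) e2
  have key : ((p.1:ℝ)+1)*((p.2:ℝ)+1)*((((k+2).choose (p.1+1) * (k+2).choose (p.2+1) : ℕ)):ℝ)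
      = ((k:ℝ)+2)^2 * (((k+1).choose p.1 * (k+1).choose p.2 : ℕ) : ℝ) := by
    push_cast
    linear_combination (((p.2:ℝ)+1) * (((k+2).choose (p.2+1):ℕ):ℝ)) * e1R
      + (((k:ℝ)+2) * (((k+1).choose p.1:ℕ):ℝ)) * e2R
  calc ((p.1:ℝ)+1) * bb (p.1+1) * (((p.2:ℝ)+1) * bb (p.2+1))
      = ((p.1:ℝ)+1)*((p.2:ℝ)+1)*(bb (p.1+1) * bb (p.2+1)) := by ring
    _ = ((p.1:ℝ)+1)*((p.2:ℝ)+1)*((((k+2).choose (p.1+1) * (k+2).choose (p.2+1) : ℕ)):ℝ)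
          / (4^(k+2) * ((k+2).factorial:ℝ)^2) := by
        rw [bb_mul (show (p.1+1) + (p.2+1) = k+2 by omega)]; ring
    _ = ((k:ℝ)+2)^2 * (((k+1).choose p.1 * (k+1).choose p.2 : ℕ) : ℝ)
          / (4^(k+2) * ((k+2).factorial:ℝ)^2) := by rw [key]

lemma natIneq (k : ℕ) :
    4*(k+2)^2*((2*k+2).choose (k+1))
      ≤ (k+3)*((2*k+4).choose (k+2)) + 4*(k+2)^2*((2*k+2).choose k) := by
  have hk2 : k+1+1 = k+2 := by omega
  have h34 : 2*k+3+1 = 2*k+4 := by omega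
  have h23 : 2*k+2+1 = 2*k+3 := by omega
  have s1 : (2*k+4) * ((2*k+3).choose (k+1)) = ((2*k+4).choose (k+2)) * (k+2) := by
    have h := Nat.add_one_mul_choose_eq (2*k+3) (k+1)
    simp only [Nat.succ_eq_add_one, h34, hk2] at h
    exact h
  have s2 : (2*k+3) * ((2*k+2).choose (k+1)) = ((2*k+3).choose (k+2)) * (k+2) := by
    have h := Nat.add_one_mul_choose_eq (2*k+2) (k+1)
    simp only [Nat.succ_eq_add_one, h23, hk2] at h
    exact h
  have s3 : (2*k+3).choose (k+2) = (2*k+3).choose (k+1) :=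
    Nat.choose_symm_of_eq_add (by omega)
  have hA : (k+2)^2 * ((2*k+4).choose (k+2))
      = (2*k+4)*(2*k+3)*((2*k+2).choose (k+1)) := by
    calc (k+2)^2 * ((2*k+4).choose (k+2))
        = (k+2) * (((2*k+4).choose (k+2)) * (k+2)) := by ring
      _ = (k+2) * ((2*k+4) * ((2*k+3).choose (k+1))) := by rw [← s1]
      _ = (2*k+4) * (((2*k+3).choose (k+2)) * (k+2)) := by rw [s3]; ring
      _ = (2*k+4) * ((2*k+3) * ((2*k+2).choose (k+1))) := by rw [← s2]
      _ = (2*k+4)*(2*k+3)*((2*k+2).choose (k+1)) := by ring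
  have hB : (k+2) * ((2*k+2).choose k) = (k+1) * ((2*k+2).choose (k+1)) := by
    have h := Nat.choose_succ_right_eq (2*k+2) k
    have h2 : 2*k+2-k = k+2 := by omega
    rw [h2] at h
    calc (k+2) * ((2*k+2).choose k) = ((2*k+2).choose k) * (k+2) := mul_comm _ _
      _ = ((2*k+2).choose (k+1)) * (k+1) := h.symm
      _ = (k+1) * ((2*k+2).choose (k+1)) := mul_comm _ _
  have poly : 4*(k+2)^4 ≤ (k+3)*((2*k+4)*(2*k+3)) + 4*(k+2)^3*(k+1) := by nlinarith
  have scaled : (k+2)^2 * (4*(k+2)^2*((2*k+2).choose (k+1)))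
      ≤ (k+2)^2 * ((k+3)*((2*k+4).choose (k+2)) + 4*(k+2)^2*((2*k+2).choose k)) := by
    have l1 : (k+2)^2 * (4*(k+2)^2*((2*k+2).choose (k+1)))
        = (4*(k+2)^4) * ((2*k+2).choose (k+1)) := by ring
    have l2 : (k+2)^2 * ((k+3)*((2*k+4).choose (k+2)) + 4*(k+2)^2*((2*k+2).choose k))
        = (k+3)*((k+2)^2 * ((2*k+4).choose (k+2)))
          + (4*(k+2)^3)*((k+2) * ((2*k+2).choose k)) := by ring
    rw [l1, l2, hA, hB]
    calc (4*(k+2)^4) * ((2*k+2).choose (k+1))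
        ≤ ((k+3)*((2*k+4)*(2*k+3)) + 4*(k+2)^3*(k+1)) * ((2*k+2).choose (k+1)) :=
          Nat.mul_le_mul_right _ poly
      _ = (k+3)*((2*k+4)*(2*k+3)*((2*k+2).choose (k+1)))
          + (4*(k+2)^3)*((k+1)*((2*k+2).choose (k+1))) := by ring
  exact Nat.le_of_mul_le_mul_left scaled (by positivity)


lemma coreIneq (k : ℕ) : C2 (k+1) ≤ ((k:ℝ)+3) * C2 (k+2) + 4 * DD (k+2) := by
  have e1 : (k+1)+(k+1) = 2*k+2 := by omega
  have e2 : (k+2)+(k+2) = 2*k+4 := by omega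
  have hC1 := C2_eq (k+1); rw [e1] at hC1
  have hC2 := C2_eq (k+2); rw [e2] at hC2
  have hD := DD_eq k; rw [e1] at hD
  have hfacpos : (0:ℝ) < ((k+1).factorial:ℝ) := by exact_mod_cast (k+1).factorial_pos
  have hfac : ((k+2).factorial : ℝ) = ((k:ℝ)+2) * ((k+1).factorial:ℝ) := by
    rw [show k+2 = (k+1)+1 by omega, Nat.factorial_succ]; push_cast; ring
  have hD2 : (0:ℝ) < 4^(k+2) * ((k+2).factorial:ℝ)^2 := by
    have : (0:ℝ) < ((k+2).factorial:ℝ) := by exact_mod_cast (k+2).factorial_pos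
    positivity
  have L : C2 (k+1) = (4*((k:ℝ)+2)^2*(((2*k+2).choose (k+1) : ℕ):ℝ))
      / (4^(k+2) * ((k+2).factorial:ℝ)^2) := by
    rw [hC1, hfac, show (4:ℝ)^(k+2) = 4 * 4^(k+1) by rw [pow_succ]; ring]
    have h4 : ((4:ℝ)^(k+1)) ≠ 0 := by positivity
    field_simp
  have R : ((k:ℝ)+3) * C2 (k+2) + 4 * DD (k+2)
      = (((k:ℝ)+3)*(((2*k+4).choose (k+2) : ℕ):ℝ)
          + 4*((k:ℝ)+2)^2*(((2*k+2).choose k : ℕ):ℝ))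
        / (4^(k+2) * ((k+2).factorial:ℝ)^2) := by
    rw [hC2, hD]; ring
  rw [L, R, div_le_div_iff_of_pos_right hD2]
  have natI : ((4*(k+2)^2*((2*k+2).choose (k+1)) : ℕ) : ℝ)
      ≤ (((k+3)*((2*k+4).choose (k+2)) + 4*(k+2)^2*((2*k+2).choose k) : ℕ) : ℝ) :=
    Nat.cast_le.2 (natIneq k)
  push_cast at natI
  linarith

noncomputable def aa2 (k : ℕ) : ℝ := ((k:ℝ)+1) * aa1 (k+1)

lemma aa1_nonneg (k : ℕ) : 0 ≤ aa1 k := by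
  have := bb_nonneg (k+1); rw [aa1]; positivity

lemma aa1_le (k : ℕ) : aa1 k ≤ bb k := by
  rw [aa1, bb_succ k]
  have h := bb_nonneg (k+1)
  have hc : (k:ℝ)+1 ≤ 4*((k:ℝ)+1)^2 := by nlinarith [sq_nonneg ((k:ℝ)+1), Nat.cast_nonneg (α := ℝ) k]
  exact mul_le_mul_of_nonneg_right hc h

lemma aa2_nonneg (k : ℕ) : 0 ≤ aa2 k := by
  have := aa1_nonneg (k+1); rw [aa2]; positivity

lemma aa2_le (k : ℕ) : aa2 k ≤ bb k := by
  have h1 : aa1 (k+1) ≤ bb (k+1) := aa1_le (k+1)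
  have h2 : ((k:ℝ)+1) * bb (k+1) ≤ bb k := by
    rw [bb_succ k]
    have h := bb_nonneg (k+1)
    have hc : (k:ℝ)+1 ≤ 4*((k:ℝ)+1)^2 := by nlinarith [sq_nonneg ((k:ℝ)+1), Nat.cast_nonneg (α := ℝ) k]
    exact mul_le_mul_of_nonneg_right hc h
  calc aa2 k = ((k:ℝ)+1) * aa1 (k+1) := rfl
    _ ≤ ((k:ℝ)+1) * bb (k+1) := by
        apply mul_le_mul_of_nonneg_left h1 (by positivity)
    _ ≤ bb k := h2

/-- Master summability: coefficients bounded by `4^k * bb k = 1/(k!)²` give entire series. -/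
lemma summable_norm_master (w : ℕ → ℝ) (hw : ∀ k, |w k| ≤ (4:ℝ)^k * bb k) (y : ℝ) :
    Summable (fun k => ‖w k * y ^ k‖) := by
  refine Summable.of_nonneg_of_le (fun k => norm_nonneg _) (fun k => ?_)
    (Real.summable_pow_div_factorial |y|)
  have hfac : (1:ℝ) ≤ (k.factorial:ℝ) := by exact_mod_cast k.factorial_pos
  have h1 : ‖w k * y ^ k‖ = |w k| * |y| ^ k := by
    rw [norm_mul, Real.norm_eq_abs, Real.norm_eq_abs, abs_pow]
  rw [h1]
  have h2 : |w k| * |y| ^ k ≤ ((4:ℝ)^k * bb k) * |y| ^ k :=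
    mul_le_mul_of_nonneg_right (hw k) (by positivity)
  have h3 : ((4:ℝ)^k * bb k) * |y| ^ k ≤ |y| ^ k / (k.factorial:ℝ) := by
    rw [bb]
    have h4 : ((4:ℝ)^k * ((4:ℝ)^k * (k.factorial:ℝ)^2)⁻¹) = ((k.factorial:ℝ)^2)⁻¹ := by
      have : ((4:ℝ)^k) ≠ 0 := by positivity
      field_simp
    rw [h4, div_eq_mul_inv, mul_comm (|y|^k) _]
    apply mul_le_mul_of_nonneg_right _ (by positivity)
    apply inv_anti₀ (by positivity)
    nlinarith [hfac]
  linarith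

lemma summable_master (w : ℕ → ℝ) (hw : ∀ k, |w k| ≤ (4:ℝ)^k * bb k) (y : ℝ) :
    Summable (fun k => w k * y ^ k) :=
  (summable_norm_master w hw y).of_norm

lemma bb_bound (k : ℕ) : |bb k| ≤ (4:ℝ)^k * bb k := by
  rw [abs_of_nonneg (bb_nonneg k)]
  nlinarith [bb_nonneg k, one_le_pow₀ (show (1:ℝ) ≤ 4 by norm_num) (n := k)]

lemma aa1_bound (k : ℕ) : |aa1 k| ≤ (4:ℝ)^k * bb k := by
  rw [abs_of_nonneg (aa1_nonneg k)]
  calc aa1 k ≤ bb k := aa1_le k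
    _ ≤ 4^k * bb k := by nlinarith [bb_nonneg k, one_le_pow₀ (show (1:ℝ) ≤ 4 by norm_num) (n := k)]

lemma aa2_bound (k : ℕ) : |aa2 k| ≤ (4:ℝ)^k * bb k := by
  rw [abs_of_nonneg (aa2_nonneg k)]
  calc aa2 k ≤ bb k := aa2_le k
    _ ≤ 4^k * bb k := by nlinarith [bb_nonneg k, one_le_pow₀ (show (1:ℝ) ≤ 4 by norm_num) (n := k)]


noncomputable def gg (y : ℝ) : ℝ := ∑' (k:ℕ), bb k * y^k
noncomputable def gg1 (y : ℝ) : ℝ := ∑' (k:ℕ), aa1 k * y^k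
noncomputable def gg2 (y : ℝ) : ℝ := ∑' (k:ℕ), aa2 k * y^k

lemma natcast_le_two_pow (k : ℕ) : (k:ℝ) ≤ (2:ℝ)^k := by
  have := Nat.lt_two_pow_self (n := k)
  have h : (k:ℝ) ≤ ((2^k : ℕ) : ℝ) := by exact_mod_cast this.le
  simpa [Nat.cast_pow] using h

lemma kw_bound (w : ℕ → ℝ) (hw : ∀ k, |w k| ≤ (2:ℝ)^k * bb k) (k : ℕ) :
    |(k:ℝ) * w k| ≤ (4:ℝ)^k * bb k := by
  rw [abs_mul, Nat.abs_cast]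
  calc (k:ℝ) * |w k| ≤ (2:ℝ)^k * ((2:ℝ)^k * bb k) := by
        apply mul_le_mul (natcast_le_two_pow k) (hw k) (abs_nonneg _) (by positivity)
    _ = (4:ℝ)^k * bb k := by rw [← mul_assoc, ← mul_pow]; norm_num

/-- Differentiation of an entire series with coefficients dominated by `2^k bb k`. -/
lemma hasDerivAt_series (w : ℕ → ℝ) (hw : ∀ k, |w k| ≤ (2:ℝ)^k * bb k) (x : ℝ) :
    HasDerivAt (fun y => ∑' (k:ℕ), w k * y ^ k) (∑' (k:ℕ), ((k:ℝ)+1) * w (k+1) * x ^ k) x := by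
  have hw4 : ∀ k, |w k| ≤ (4:ℝ)^k * bb k := fun k =>
    (hw k).trans (by
      have := bb_nonneg k
      have h24 : (2:ℝ)^k ≤ (4:ℝ)^k := pow_le_pow_left₀ (by norm_num) (by norm_num) k
      nlinarith)
  set R : ℝ := |x| + 1 with hR
  have hR1 : (1:ℝ) ≤ R := by
    have := abs_nonneg x; rw [hR]; linarith
  have hball : x ∈ Metric.ball (0:ℝ) R := by
    simp only [Metric.mem_ball, Real.dist_eq, sub_zero]
    rw [hR]; linarith
  have hu : Summable (fun (k:ℕ) => ((k:ℝ) * ((2:ℝ)^k * bb k)) * R^k) := by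
    apply summable_master _ _ R
    intro k
    apply kw_bound
    intro j
    have hbj := bb_nonneg j
    rw [abs_of_nonneg (by positivity : (0:ℝ) ≤ (2:ℝ)^j * bb j)]
  have hbound : ∀ (n : ℕ) (y : ℝ), y ∈ Metric.ball (0:ℝ) R →
      ‖w n * ((n:ℝ) * y^(n-1))‖ ≤ ((n:ℝ) * ((2:ℝ)^n * bb n)) * R^n := by
    intro n y hy
    have hyR : |y| ≤ R := by
      simp only [Metric.mem_ball, Real.dist_eq, sub_zero] at hy
      exact hy.le
    have h1 : ‖w n * ((n:ℝ) * y^(n-1))‖ = |w n| * ((n:ℝ) * |y|^(n-1)) := by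
      rw [norm_mul, Real.norm_eq_abs, Real.norm_eq_abs, abs_mul, Nat.abs_cast, abs_pow]
    rw [h1]
    have h2 : |y|^(n-1) ≤ R^n := by
      calc |y|^(n-1) ≤ R^(n-1) := pow_le_pow_left₀ (abs_nonneg y) hyR (n-1)
        _ ≤ R^n := pow_le_pow_right₀ hR1 (Nat.sub_le n 1)
    calc |w n| * ((n:ℝ) * |y|^(n-1)) ≤ ((2:ℝ)^n * bb n) * ((n:ℝ) * R^n) := by
          apply mul_le_mul (hw n) (mul_le_mul_of_nonneg_left h2 (Nat.cast_nonneg n))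
            (by positivity) (by have := bb_nonneg n; positivity)
      _ = ((n:ℝ) * ((2:ℝ)^n * bb n)) * R^n := by ring
  have key := hasDerivAt_tsum_of_isPreconnected hu Metric.isOpen_ball
    (convex_ball (0:ℝ) R).isPreconnected
    (g := fun n y => w n * y^n) (g' := fun n y => w n * ((n:ℝ) * y^(n-1)))
    (fun n y _ => HasDerivAt.const_mul (w n) (hasDerivAt_pow n y))
    (fun n y hy => hbound n y hy) hball (summable_master w hw4 x) hball
  have hsumf : Summable (fun (n:ℕ) => w n * ((n:ℝ) * x^(n-1))) :=
    Summable.of_norm_bounded hu (fun n => hbound n x hball)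
  have heq : ∑' (n:ℕ), w n * ((n:ℝ) * x^(n-1)) = ∑' (k:ℕ), ((k:ℝ)+1) * w (k+1) * x^k := by
    rw [Summable.tsum_eq_zero_add hsumf]
    simp only [Nat.cast_zero, zero_mul, mul_zero, zero_add, Nat.add_sub_cancel]
    apply tsum_congr
    intro k
    push_cast
    ring
  rw [← heq]
  exact key

lemma bb_bound2 (k : ℕ) : |bb k| ≤ (2:ℝ)^k * bb k := by
  rw [abs_of_nonneg (bb_nonneg k)]
  nlinarith [bb_nonneg k, one_le_pow₀ (show (1:ℝ) ≤ 2 by norm_num) (n := k)]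

lemma aa1_bound2 (k : ℕ) : |aa1 k| ≤ (2:ℝ)^k * bb k := by
  rw [abs_of_nonneg (aa1_nonneg k)]
  calc aa1 k ≤ bb k := aa1_le k
    _ ≤ 2^k * bb k := by
      nlinarith [bb_nonneg k, one_le_pow₀ (show (1:ℝ) ≤ 2 by norm_num) (n := k)]

lemma summable_gg (y : ℝ) : Summable (fun k => bb k * y^k) :=
  summable_master bb bb_bound y

lemma summable_gg1 (y : ℝ) : Summable (fun k => aa1 k * y^k) :=
  summable_master aa1 aa1_bound y

lemma summable_gg2 (y : ℝ) : Summable (fun k => aa2 k * y^k) :=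
  summable_master aa2 aa2_bound y

lemma hasDerivAt_gg (x : ℝ) : HasDerivAt gg (gg1 x) x := by
  have h := hasDerivAt_series bb bb_bound2 x
  have : ∑' (k:ℕ), ((k:ℝ)+1) * bb (k+1) * x^k = gg1 x := by
    apply tsum_congr; intro k; rw [aa1]
  rw [this] at h
  exact h

lemma hasDerivAt_gg1 (x : ℝ) : HasDerivAt gg1 (gg2 x) x := by
  have h := hasDerivAt_series aa1 aa1_bound2 x
  have : ∑' (k:ℕ), ((k:ℝ)+1) * aa1 (k+1) * x^k = gg2 x := by
    apply tsum_congr; intro k; rw [aa2]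
  rw [this] at h
  exact h

lemma gg_ge_one {y : ℝ} (hy : 0 ≤ y) : 1 ≤ gg y := by
  have h := Summable.le_tsum (summable_gg y) 0 (fun j _ => mul_nonneg (bb_nonneg j) (pow_nonneg hy j))
  rw [gg]; simpa [bb_zero] using h

lemma gg_pos {y : ℝ} (hy : 0 ≤ y) : 0 < gg y := lt_of_lt_of_le one_pos (gg_ge_one hy)

lemma gg1_nonneg {y : ℝ} (hy : 0 ≤ y) : 0 ≤ gg1 y :=
  tsum_nonneg (fun k => mul_nonneg (aa1_nonneg k) (pow_nonneg hy k))

/-- The Bessel ODE in series form: `g = 4 g' + 4 y g''`. -/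
lemma ode (y : ℝ) : gg y = 4 * gg1 y + 4 * y * gg2 y := by
  have h1 : Summable (fun k => 4 * aa1 (k+1) * y^(k+1)) := by
    have := (summable_gg1 y).mul_left 4
    have h := (summable_nat_add_iff 1).2 this
    exact h.congr (fun k => by push_cast; ring)
  have h2 : Summable (fun k => 4 * aa2 k * y^(k+1)) := by
    have := ((summable_gg2 y).mul_left 4).mul_right y
    exact this.congr (fun k => by push_cast; ring)
  have e1 : 4 * gg1 y = 4 * aa1 0 + ∑' (k:ℕ), 4 * aa1 (k+1) * y^(k+1) := by
    rw [gg1, ← tsum_mul_left, Summable.tsum_eq_zero_add ((summable_gg1 y).mul_left 4)]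
    simp only [pow_zero, mul_one]
    congr 1
    apply tsum_congr; intro k; ring
  have e2 : 4 * y * gg2 y = ∑' (k:ℕ), 4 * aa2 k * y^(k+1) := by
    rw [gg2, ← tsum_mul_left]
    apply tsum_congr; intro k; ring
  have e3 : gg y = bb 0 + ∑' (k:ℕ), bb (k+1) * y^(k+1) := by
    rw [gg, Summable.tsum_eq_zero_add (summable_gg y)]
    simp only [pow_zero, mul_one]
  rw [e1, e2, e3]
  have e4 : ∑' (k:ℕ), bb (k+1) * y^(k+1)
      = (∑' (k:ℕ), 4 * aa1 (k+1) * y^(k+1)) + ∑' (k:ℕ), 4 * aa2 k * y^(k+1) := by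
    rw [← Summable.tsum_add h1 h2]
    apply tsum_congr; intro k
    have hcoef : bb (k+1) = 4 * aa1 (k+1) + 4 * aa2 k := by
      simp only [aa2, aa1]
      rw [bb_succ (k+1)]
      push_cast
      ring
    rw [hcoef]; ring
  rw [e4]
  have e5 : bb 0 = 4 * aa1 0 := by
    rw [aa1, bb_succ 0]; norm_num
  rw [e5]; ring




lemma C2_zero : C2 0 = 1 := by
  simp [C2, bb_zero]

lemma C2_one : C2 1 = 1/2 := by
  rw [C2, sum_antidiagonal_succ (n := 0)]
  norm_num [bb, Nat.factorial]

lemma CM_zero : CM 0 = 1/4 := by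
  norm_num [CM, aa1, bb, Nat.factorial]

noncomputable def TT (y : ℝ) : ℕ → ℝ
  | 0 => 0
  | (k+1) => 4*y^2*(C1 k*y^k)

set_option maxHeartbeats 1000000 in
lemma KI {y : ℝ} (hy : 0 ≤ y) :
    y * (gg y)^2 ≤ (gg y)^2 + 2*y*(gg y * gg1 y) + 4*y^2*(gg1 y)^2 := by
  have hbn : Summable (fun k => ‖bb k * y^k‖) := summable_norm_master bb bb_bound y
  have han : Summable (fun k => ‖aa1 k * y^k‖) := summable_norm_master aa1 aa1_bound y
  have inner2 : ∀ n:ℕ, (∑ p ∈ antidiagonal n, (bb p.1*y^p.1)*(bb p.2*y^p.2)) = C2 n * y^n := by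
    intro n; rw [C2, Finset.sum_mul]
    refine Finset.sum_congr rfl fun p hp => ?_
    have h := Finset.HasAntidiagonal.mem_antidiagonal.1 hp
    rw [← h, pow_add]; ring
  have innerM : ∀ n:ℕ, (∑ p ∈ antidiagonal n, (bb p.1*y^p.1)*(aa1 p.2*y^p.2)) = CM n * y^n := by
    intro n; rw [CM, Finset.sum_mul]
    refine Finset.sum_congr rfl fun p hp => ?_
    have h := Finset.HasAntidiagonal.mem_antidiagonal.1 hp
    rw [← h, pow_add]; ring
  have inner1 : ∀ n:ℕ, (∑ p ∈ antidiagonal n, (aa1 p.1*y^p.1)*(aa1 p.2*y^p.2)) = C1 n * y^n := by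
    intro n; rw [C1, Finset.sum_mul]
    refine Finset.sum_congr rfl fun p hp => ?_
    have h := Finset.HasAntidiagonal.mem_antidiagonal.1 hp
    rw [← h, pow_add]; ring
  have P2 : (gg y)^2 = ∑' (n:ℕ), C2 n * y^n := by
    rw [sq, gg, tsum_mul_tsum_eq_tsum_sum_antidiagonal_of_summable_norm hbn hbn]
    exact tsum_congr inner2
  have PM : gg y * gg1 y = ∑' (n:ℕ), CM n * y^n := by
    rw [gg, gg1, tsum_mul_tsum_eq_tsum_sum_antidiagonal_of_summable_norm hbn han]
    exact tsum_congr innerM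
  have P1 : (gg1 y)^2 = ∑' (n:ℕ), C1 n * y^n := by
    rw [sq, gg1, tsum_mul_tsum_eq_tsum_sum_antidiagonal_of_summable_norm han han]
    exact tsum_congr inner1
  have S2 : Summable (fun n:ℕ => C2 n * y^n) :=
    (summable_sum_mul_antidiagonal_of_summable_mul (summable_mul_of_summable_norm hbn hbn)).congr inner2
  have SM : Summable (fun n:ℕ => CM n * y^n) :=
    (summable_sum_mul_antidiagonal_of_summable_mul (summable_mul_of_summable_norm hbn han)).congr innerM
  have S1 : Summable (fun n:ℕ => C1 n * y^n) :=
    (summable_sum_mul_antidiagonal_of_summable_mul (summable_mul_of_summable_norm han han)).congr inner1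
  have S2s : Summable (fun n:ℕ => C2 (n+1) * y^(n+1)) := (summable_nat_add_iff 1).2 S2
  have ST : Summable (fun n:ℕ => TT y n) := by
    apply (summable_nat_add_iff 1).1
    exact (S1.mul_left (4*y^2)).congr (fun k => by rw [TT])
  have htsumT : (∑' (n:ℕ), TT y n)
      = 4*y^2*(gg1 y)^2 := by
    rw [Summable.tsum_eq_zero_add ST]
    have e0 : TT y 0 = 0 := rfl
    have es : ∀ n:ℕ, TT y (n+1) = 4*y^2*(C1 n*y^n) := fun n => rfl
    simp only [e0, es, zero_add]
    rw [tsum_mul_left, ← P1]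
  have termwise : ∀ n:ℕ, y*(C2 n*y^n)
      ≤ C2 (n+1)*y^(n+1) + 2*y*(CM n*y^n)
        + TT y n := by
    intro n
    cases n with
    | zero =>
      show y*(C2 0*y^0) ≤ C2 1*y^1 + 2*y*(CM 0*y^0) + TT y 0
      rw [C2_zero, C2_one, CM_zero, show TT y 0 = 0 from rfl]
      ring_nf
      exact le_rfl
    | succ k =>
      show y*(C2 (k+1)*y^(k+1)) ≤ C2 (k+2)*y^(k+2) + 2*y*(CM (k+1)*y^(k+1))
          + TT y (k+1)
      rw [show TT y (k+1) = 4*y^2*(C1 k*y^k) from rfl]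
      have h := coreIneq k
      have h2 := idM (k+1)
      push_cast at h2
      have h3 := idP k
      have key := mul_le_mul_of_nonneg_right h (pow_nonneg hy (k+2))
      calc y*(C2 (k+1)*y^(k+1)) = C2 (k+1)*y^(k+2) := by ring
        _ ≤ (((k:ℝ)+3)*C2 (k+2) + 4*DD (k+2))*y^(k+2) := key
        _ = C2 (k+2)*y^(k+2) + 2*y*(CM (k+1)*y^(k+1)) + 4*y^2*(C1 k*y^k) := by
            rw [h3]
            linear_combination (-(y^(k+2))) * h2
  have big : Summable (fun n:ℕ => C2 (n+1)*y^(n+1) + 2*y*(CM n*y^n)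
      + TT y n) :=
    (S2s.add (SM.mul_left (2*y))).add ST
  have main := Summable.tsum_le_tsum termwise (S2.mul_left y) big
  have lhs_eq : y * (gg y)^2 = ∑' (n:ℕ), y*(C2 n*y^n) := by
    rw [P2, tsum_mul_left]
  have rhs_split : (∑' (n:ℕ), (C2 (n+1)*y^(n+1) + 2*y*(CM n*y^n)
      + TT y n))
      = (∑' (n:ℕ), C2 (n+1)*y^(n+1)) + (∑' (n:ℕ), 2*y*(CM n*y^n))
        + 4*y^2*(gg1 y)^2 := by
    rw [Summable.tsum_add (S2s.add (SM.mul_left (2*y))) ST, Summable.tsum_add S2s (SM.mul_left (2*y)), htsumT]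
  have first_le : (∑' (n:ℕ), C2 (n+1)*y^(n+1)) ≤ (gg y)^2 := by
    rw [P2, Summable.tsum_eq_zero_add S2]
    have : (0:ℝ) ≤ C2 0 * y^0 := by rw [C2_zero]; norm_num
    linarith
  have second_eq : (∑' (n:ℕ), 2*y*(CM n*y^n)) = 2*y*(gg y * gg1 y) := by
    rw [tsum_mul_left, ← PM]
  rw [lhs_eq]
  calc (∑' (n:ℕ), y*(C2 n*y^n)) ≤ _ := main
    _ = (∑' (n:ℕ), C2 (n+1)*y^(n+1)) + (∑' (n:ℕ), 2*y*(CM n*y^n)) + 4*y^2*(gg1 y)^2 :=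
        rhs_split
    _ ≤ (gg y)^2 + 2*y*(gg y * gg1 y) + 4*y^2*(gg1 y)^2 := by
        rw [second_eq]
        linarith [first_le]


noncomputable def phi (a t : ℝ) : ℝ :=
  Real.log t + (-(t^2+a^2)/2) + Real.log (gg (a^2*t^2))

noncomputable def psi (a t : ℝ) : ℝ :=
  t⁻¹ - t + 2*a^2*t*gg1 (a^2*t^2) / gg (a^2*t^2)

lemma hy_sq (a t : ℝ) : HasDerivAt (fun s : ℝ => a^2*s^2) (a^2*(2*t)) t := by
  have h := (hasDerivAt_pow 2 t).const_mul (a^2)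
  simpa using h

lemma hasDerivAt_phi (a : ℝ) {t : ℝ} (ht : 0 < t) : HasDerivAt (phi a) (psi a t) t := by
  have hy0 : (0:ℝ) ≤ a^2*t^2 := by positivity
  have hG : (0:ℝ) < gg (a^2*t^2) := gg_pos hy0
  have h1 : HasDerivAt (fun s : ℝ => Real.log s) t⁻¹ t := Real.hasDerivAt_log ht.ne'
  have hsq : HasDerivAt (fun s : ℝ => s^2 + a^2) (2*t) t := by
    simpa using (hasDerivAt_pow 2 t).add_const (a^2)
  have h2 : HasDerivAt (fun s : ℝ => -(s^2+a^2)/2) (-(2*t)/2) t := hsq.neg.div_const 2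
  have hcomp : HasDerivAt (fun s : ℝ => gg (a^2*s^2)) (gg1 (a^2*t^2) * (a^2*(2*t))) t :=
    (hasDerivAt_gg (a^2*t^2)).comp (h := fun s : ℝ => a^2*s^2) t (hy_sq a t)
  have h3 : HasDerivAt (fun s : ℝ => Real.log (gg (a^2*s^2)))
      (gg1 (a^2*t^2) * (a^2*(2*t)) / gg (a^2*t^2)) t := hcomp.log hG.ne'
  have := (h1.add h2).add h3
  refine this.congr_deriv ?_
  rw [psi]
  ring

lemma hasDerivAt_psi (a : ℝ) {t : ℝ} (ht : 0 < t) :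
    HasDerivAt (psi a)
      (-(t^2)⁻¹ - 1 +
        ((2*a^2*gg1 (a^2*t^2) + 4*a^4*t^2*gg2 (a^2*t^2))*gg (a^2*t^2)
          - 4*a^4*t^2*(gg1 (a^2*t^2))^2) / (gg (a^2*t^2))^2) t := by
  have hy0 : (0:ℝ) ≤ a^2*t^2 := by positivity
  have hG : (0:ℝ) < gg (a^2*t^2) := gg_pos hy0
  have hinv : HasDerivAt (fun s : ℝ => s⁻¹) (-(t^2)⁻¹) t := by
    simpa using hasDerivAt_inv ht.ne'
  have hid : HasDerivAt (fun s : ℝ => s) 1 t := hasDerivAt_id t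
  have hu : HasDerivAt (fun s : ℝ => 2*a^2*s) (2*a^2) t := by
    simpa using (hasDerivAt_id t).const_mul (2*a^2)
  have hv : HasDerivAt (fun s : ℝ => gg1 (a^2*s^2)) (gg2 (a^2*t^2) * (a^2*(2*t))) t :=
    (hasDerivAt_gg1 (a^2*t^2)).comp (h := fun s : ℝ => a^2*s^2) t (hy_sq a t)
  have hN : HasDerivAt (fun s : ℝ => 2*a^2*s*gg1 (a^2*s^2))
      (2*a^2 * gg1 (a^2*t^2) + 2*a^2*t*(gg2 (a^2*t^2) * (a^2*(2*t)))) t := hu.mul hv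
  have hD : HasDerivAt (fun s : ℝ => gg (a^2*s^2)) (gg1 (a^2*t^2) * (a^2*(2*t))) t :=
    (hasDerivAt_gg (a^2*t^2)).comp (h := fun s : ℝ => a^2*s^2) t (hy_sq a t)
  have hQ := hN.div hD hG.ne'
  have := (hinv.sub hid).add hQ
  refine this.congr_deriv ?_
  field_simp
  ring

lemma psi2_nonpos (a : ℝ) {t : ℝ} (ht : 0 < t) :
    -(t^2)⁻¹ - 1 +
      ((2*a^2*gg1 (a^2*t^2) + 4*a^4*t^2*gg2 (a^2*t^2))*gg (a^2*t^2)
        - 4*a^4*t^2*(gg1 (a^2*t^2))^2) / (gg (a^2*t^2))^2 ≤ 0 := by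
  have hy0 : (0:ℝ) ≤ a^2*t^2 := by positivity
  have hG : (0:ℝ) < gg (a^2*t^2) := gg_pos hy0
  have hODE := ode (a^2*t^2)
  have hKI := KI hy0
  have hNum : (2*a^2*gg1 (a^2*t^2) + 4*a^4*t^2*gg2 (a^2*t^2))*gg (a^2*t^2)
        - 4*a^4*t^2*(gg1 (a^2*t^2))^2
      = a^2*((gg (a^2*t^2))^2 - 2*gg1 (a^2*t^2)*gg (a^2*t^2)
          - 4*(a^2*t^2)*(gg1 (a^2*t^2))^2) := by
    linear_combination (-(a^2 * gg (a^2*t^2))) * hODE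
  have htG : (0:ℝ) ≤ t^2*(gg (a^2*t^2))^2 := by positivity
  have key : ((2*a^2*gg1 (a^2*t^2) + 4*a^4*t^2*gg2 (a^2*t^2))*gg (a^2*t^2)
        - 4*a^4*t^2*(gg1 (a^2*t^2))^2) * t^2 ≤ (t^2+1)*(gg (a^2*t^2))^2 := by
    have e : ((2*a^2*gg1 (a^2*t^2) + 4*a^4*t^2*gg2 (a^2*t^2))*gg (a^2*t^2)
          - 4*a^4*t^2*(gg1 (a^2*t^2))^2) * t^2
        = (a^2*t^2)*(gg (a^2*t^2))^2 - 2*(a^2*t^2)*(gg (a^2*t^2)*gg1 (a^2*t^2))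
          - 4*(a^2*t^2)^2*(gg1 (a^2*t^2))^2 := by
      linear_combination (t^2) * hNum
    rw [e]
    linarith [hKI, htG]
  have hGG : (0:ℝ) < (gg (a^2*t^2))^2 := by positivity
  have htt : (0:ℝ) < t^2 := by positivity
  have h5 : ((2*a^2*gg1 (a^2*t^2) + 4*a^4*t^2*gg2 (a^2*t^2))*gg (a^2*t^2)
        - 4*a^4*t^2*(gg1 (a^2*t^2))^2) / (gg (a^2*t^2))^2 ≤ (t^2+1)/t^2 := by
    rw [div_le_div_iff₀ hGG htt]
    linarith [key]
  have h6 : (t^2+1)/t^2 = 1 + (t^2)⁻¹ := by field_simp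
  linarith [h5, h6.le, h6.ge]

lemma concave_phi (a : ℝ) : ConcaveOn ℝ (Set.Ioi (0:ℝ)) (phi a) := by
  have hderiv : ∀ t ∈ Set.Ioi (0:ℝ), deriv (phi a) t = psi a t := fun t ht =>
    (hasDerivAt_phi a ht).deriv
  apply concaveOn_of_deriv2_nonpos (convex_Ioi 0)
  · exact fun t ht => (hasDerivAt_phi a ht).continuousAt.continuousWithinAt
  · rw [interior_Ioi]
    exact fun t ht => (hasDerivAt_phi a ht).differentiableAt.differentiableWithinAt
  · rw [interior_Ioi]
    intro t ht
    have hev : deriv (phi a) =ᶠ[nhds t] psi a := by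
      filter_upwards [isOpen_Ioi.mem_nhds ht] with s hs
      exact hderiv s hs
    have : DifferentiableAt ℝ (psi a) t := (hasDerivAt_psi a ht).differentiableAt
    exact (Filter.EventuallyEq.differentiableAt_iff hev).2 this |>.differentiableWithinAt
  · rw [interior_Ioi]
    intro t ht
    have hev : deriv (phi a) =ᶠ[nhds t] psi a := by
      filter_upwards [isOpen_Ioi.mem_nhds ht] with s hs
      exact hderiv s hs
    have h2 : deriv (deriv (phi a)) t = deriv (psi a) t := hev.deriv_eq
    have h3 : deriv (psi a) t = _ := (hasDerivAt_psi a ht).deriv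
    show deriv^[2] (phi a) t ≤ 0
    rw [Function.iterate_succ, Function.iterate_one, Function.comp_apply]
    rw [h2, h3]
    exact psi2_nonpos a ht

end RiceAux

lemma besselI_zero_eq (x : ℝ) : besselI 0 x = RiceAux.gg (x^2) := by
  rw [besselI, RiceAux.gg]
  apply tsum_congr
  intro k
  have h1 : (0:ℝ) + 2*(k:ℝ) = ((2*k : ℕ) : ℝ) := by push_cast; ring
  rw [h1, Real.rpow_natCast]
  have h2 : (0:ℝ) + (k:ℝ) + 1 = ((k:ℕ):ℝ) + 1 := by ring
  rw [h2, Real.Gamma_nat_eq_factorial]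
  have hx : (x/2)^(2*k) = (x^2)^k / 4^k := by
    rw [pow_mul, show (x/2)^2 = x^2/4 by ring, div_pow]
  rw [hx, RiceAux.bb, div_div, inv_mul_eq_div]
  congr 1
  ring

/-- the Rice density `f(t) = t e^{-(t²+a²)/2} I₀(at)` (`a ≥ 0`) is
log-concave on `(0, ∞)`. -/
theorem rice_density_logConcave (a : ℝ) (ha : 0 ≤ a) :
    ConcaveOn ℝ (Set.Ioi 0) (fun t : ℝ => Real.log
      (t * Real.exp (-(t ^ 2 + a ^ 2) / 2) * besselI 0 (a * t))) := by
  have hcon := RiceAux.concave_phi a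
  have heq : ∀ t ∈ Set.Ioi (0:ℝ), RiceAux.phi a t
      = Real.log (t * Real.exp (-(t ^ 2 + a ^ 2) / 2) * besselI 0 (a * t)) := by
    intro t ht
    have ht0 : (0:ℝ) < t := ht
    have hy0 : (0:ℝ) ≤ a^2*t^2 := by positivity
    have hG : (0:ℝ) < RiceAux.gg (a^2*t^2) := RiceAux.gg_pos hy0
    have hb : besselI 0 (a*t) = RiceAux.gg (a^2*t^2) := by
      rw [besselI_zero_eq, mul_pow]
    rw [hb, Real.log_mul (by positivity) hG.ne',
      Real.log_mul ht0.ne' (Real.exp_ne_zero _), Real.log_exp, RiceAux.phi]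
  refine ⟨hcon.1, fun x hx y hy α β hα hβ hαβ => ?_⟩
  simp only [smul_eq_mul]
  have hmem : α*x+β*y ∈ Set.Ioi (0:ℝ) := by
    have := hcon.1 hx hy hα hβ hαβ
    simpa [smul_eq_mul] using this
  rw [← heq _ hx, ← heq _ hy, ← heq _ hmem]
  have := hcon.2 hx hy hα hβ hαβ
  simpa [smul_eq_mul] using this
end

section
/- For ν ≥ 1/2, any a > 0, and f(t) = (t^ν/a^{ν-1}) exp(-(t²+a²)/2) I_{ν-1}(at): at any point t in the declining phase of f (i.e., where f'(t) ≤ 0), one has (d²/dt²) log f(t) ≤ 0; that is, f is log-concave on its declining phase. -/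
open Real Set Filter MeasureTheory

noncomputable def besselG (μ : ℝ) (y : ℝ) : ℝ :=
  ∑' k : ℕ, y ^ k / ((Nat.factorial k : ℝ) * Real.Gamma (μ + (k : ℝ) + 1))

lemma denom_pos {μ : ℝ} (hμ : -1 < μ) (k : ℕ) :
    0 < (Nat.factorial k : ℝ) * Real.Gamma (μ + (k : ℝ) + 1) := by
  have h1 : (0:ℝ) < Nat.factorial k := by exact_mod_cast Nat.factorial_pos k
  have h2 : 0 < Real.Gamma (μ + (k : ℝ) + 1) := by
    apply Real.Gamma_pos_of_pos
    have : (0:ℝ) ≤ k := Nat.cast_nonneg k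
    linarith
  positivity

/-- ratio-test summability of the weighted series, z > 0 -/
lemma summable_aux {μ : ℝ} (hμ : -1 < μ) {z : ℝ} (hz : 0 < z) (m : ℕ) :
    Summable (fun k : ℕ => ((k:ℝ)+1)^m * z ^ k / ((Nat.factorial k : ℝ) * Real.Gamma (μ + (k : ℝ) + 1))) := by
  set f : ℕ → ℝ := fun k => ((k:ℝ)+1)^m * z ^ k / ((Nat.factorial k : ℝ) * Real.Gamma (μ + (k : ℝ) + 1)) with hf
  have hpos : ∀ k, 0 < f k := by
    intro k
    have := denom_pos hμ k
    have : (0:ℝ) < ((k:ℝ)+1)^m * z ^ k := by positivity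
    exact div_pos this (denom_pos hμ k)
  apply summable_of_ratio_test_tendsto_lt_one (l := 0) one_pos
  · exact Eventually.of_forall fun k => (hpos k).ne'
  · have key : ∀ k : ℕ, ‖f (k+1)‖ / ‖f k‖ =
        (((k:ℝ)+2)/((k:ℝ)+1))^m * (z / (((k:ℝ)+1) * (μ + (k:ℝ) + 1))) := by
      intro k
      have hk1 : (0:ℝ) < (k:ℝ) + 1 := by positivity
      have hg : 0 < Real.Gamma (μ + (k : ℝ) + 1) := by
        apply Real.Gamma_pos_of_pos; have : (0:ℝ) ≤ k := Nat.cast_nonneg k; linarith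
      have hμk : (0:ℝ) < μ + (k:ℝ) + 1 := by have : (0:ℝ) ≤ k := Nat.cast_nonneg k; linarith
      have hGrec : Real.Gamma (μ + ((k:ℕ)+1:ℕ) + 1) = (μ + (k:ℝ) + 1) * Real.Gamma (μ + (k:ℝ) + 1) := by
        push_cast
        have : μ + ((k:ℝ)+1) + 1 = (μ + (k:ℝ) + 1) + 1 := by ring
        rw [this, Real.Gamma_add_one hμk.ne']
      have hfact : ((Nat.factorial (k+1) : ℕ) : ℝ) = ((k:ℝ)+1) * (Nat.factorial k : ℝ) := by
        rw [Nat.factorial_succ]; push_cast; ring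
      rw [Real.norm_eq_abs, Real.norm_eq_abs, abs_of_pos (hpos _), abs_of_pos (hpos _)]
      simp only [hf]
      rw [hGrec, hfact]
      have hfk : (0:ℝ) < (Nat.factorial k : ℝ) := by exact_mod_cast Nat.factorial_pos k
      push_cast
      simp only [div_pow]
      field_simp
      ring
    rw [tendsto_congr key]
    have h1 : Tendsto (fun k : ℕ => (((k:ℝ)+2)/((k:ℝ)+1))^m) atTop (nhds 1) := by
      have : Tendsto (fun k : ℕ => ((k:ℝ)+2)/((k:ℝ)+1)) atTop (nhds 1) := by
        have : (fun k : ℕ => ((k:ℝ)+2)/((k:ℝ)+1)) = fun k : ℕ => 1 + 1/((k:ℝ)+1) := by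
          funext k
          have hk1 : (0:ℝ) < (k:ℝ) + 1 := by positivity
          field_simp
          ring
        rw [this]
        have h0 : Tendsto (fun k : ℕ => 1/((k:ℝ)+1)) atTop (nhds 0) :=
          tendsto_one_div_add_atTop_nhds_zero_nat
        simpa using (tendsto_const_nhds (x := (1:ℝ))).add h0
      simpa using this.pow m
    have h2 : Tendsto (fun k : ℕ => z / (((k:ℝ)+1) * (μ + (k:ℝ) + 1))) atTop (nhds 0) := by
      apply Tendsto.div_atTop (tendsto_const_nhds (x := z))
      have hA : Tendsto (fun k : ℕ => (k:ℝ)+1) atTop atTop :=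
        tendsto_atTop_add_const_right atTop 1 tendsto_natCast_atTop_atTop
      have hB : Tendsto (fun k : ℕ => μ + (k:ℝ) + 1) atTop atTop := by
        have := tendsto_atTop_add_const_right atTop (μ+1) tendsto_natCast_atTop_atTop
        refine this.congr (fun k => by ring)
      exact hA.atTop_mul_atTop₀ hB
    simpa using h1.mul h2

lemma summable_weight {μ : ℝ} (hμ : -1 < μ) (y : ℝ) (m : ℕ) :
    Summable (fun k : ℕ => ((k:ℝ)+1)^m * y ^ k / ((Nat.factorial k : ℝ) * Real.Gamma (μ + (k : ℝ) + 1))) := by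
  have hz : (0:ℝ) < |y| + 1 := by positivity
  apply Summable.of_norm
  refine Summable.of_nonneg_of_le (fun k => norm_nonneg _) (fun k => ?_) (summable_aux hμ hz m)
  have hd := denom_pos hμ k
  rw [Real.norm_eq_abs, abs_div, abs_of_pos hd, div_le_div_iff_of_pos_right hd, abs_mul]
  have h1 : |((k:ℝ)+1)^m| = ((k:ℝ)+1)^m := abs_of_pos (by positivity)
  rw [h1, abs_pow]
  apply mul_le_mul_of_nonneg_left _ (by positivity)
  exact pow_le_pow_left₀ (abs_nonneg y) (by linarith [abs_nonneg y]) k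

lemma summable_G {μ : ℝ} (hμ : -1 < μ) (y : ℝ) :
    Summable (fun k : ℕ => y ^ k / ((Nat.factorial k : ℝ) * Real.Gamma (μ + (k : ℝ) + 1))) := by
  have := summable_weight hμ y 0
  simpa using this

lemma summable_kG {μ : ℝ} (hμ : -1 < μ) (y : ℝ) :
    Summable (fun k : ℕ => (k:ℝ) * y ^ k / ((Nat.factorial k : ℝ) * Real.Gamma (μ + (k : ℝ) + 1))) := by
  apply Summable.of_norm
  refine Summable.of_nonneg_of_le (fun k => norm_nonneg _) (fun k => ?_) (summable_weight hμ |y| 1)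
  have hd := denom_pos hμ k
  rw [Real.norm_eq_abs, abs_div, abs_of_pos hd, div_le_div_iff_of_pos_right hd, abs_mul]
  rw [abs_pow, pow_one]
  apply mul_le_mul_of_nonneg_right _ (by positivity)
  rw [Nat.abs_cast]
  linarith

lemma besselG_pos {μ : ℝ} (hμ : -1 < μ) {y : ℝ} (hy : 0 ≤ y) : 0 < besselG μ y := by
  refine Summable.tsum_pos (summable_G hμ y) (fun k => ?_) 0 ?_
  · have h := denom_pos hμ k
    positivity
  · have h := denom_pos hμ 0
    simp only [pow_zero]
    positivity

/-- the key coefficient identity: `(k+1) ↦` shift. -/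
lemma fac_gamma_succ (μ : ℝ) (k : ℕ) :
    ((Nat.factorial (k+1) : ℝ) * Real.Gamma (μ + ((k+1:ℕ):ℝ) + 1))
      = ((k:ℝ)+1) * ((Nat.factorial k : ℝ) * Real.Gamma ((μ+1) + (k:ℝ) + 1)) := by
  have h : μ + ((k+1:ℕ):ℝ) + 1 = (μ+1) + (k:ℝ) + 1 := by push_cast; ring
  rw [h, Nat.factorial_succ]
  push_cast
  ring

lemma term_shift (μ : ℝ) (y : ℝ) (k : ℕ) :
    ((k+1:ℕ):ℝ) * y ^ (k+1) / ((Nat.factorial (k+1) : ℝ) * Real.Gamma (μ + ((k+1:ℕ):ℝ) + 1))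
      = y * (y ^ k / ((Nat.factorial k : ℝ) * Real.Gamma ((μ+1) + (k : ℝ) + 1))) := by
  rw [fac_gamma_succ]
  have hk1 : ((k:ℝ)+1) ≠ 0 := by positivity
  have : ((k+1:ℕ):ℝ) * y ^ (k+1) = ((k:ℝ)+1) * (y * y ^ k) := by
    push_cast; rw [pow_succ]; ring
  rw [this, mul_div_mul_left _ _ hk1, mul_div_assoc]

/-- `∑' k, k * y^k * coeff μ k = y * besselG (μ+1) y`. -/
lemma shift_identity {μ : ℝ} (hμ : -1 < μ) (y : ℝ) :
    ∑' k : ℕ, (k:ℝ) * y ^ k / ((Nat.factorial k : ℝ) * Real.Gamma (μ + (k : ℝ) + 1))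
      = y * besselG (μ+1) y := by
  rw [Summable.tsum_eq_zero_add (summable_kG hμ y)]
  simp only [Nat.cast_zero, zero_mul, pow_zero, zero_div, zero_add]
  have heq : ∀ k : ℕ, ((k+1:ℕ):ℝ) * y ^ (k+1) / ((Nat.factorial (k+1) : ℝ) * Real.Gamma (μ + ((k+1:ℕ):ℝ) + 1))
      = y * (y ^ k / ((Nat.factorial k : ℝ) * Real.Gamma ((μ+1) + (k : ℝ) + 1))) := term_shift μ y
  rw [tsum_congr heq, tsum_mul_left]
  rfl

lemma term_shift' (μ : ℝ) (y : ℝ) (k : ℕ) :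
    ((k+1:ℕ):ℝ) * y ^ (k+1-1) / ((Nat.factorial (k+1) : ℝ) * Real.Gamma (μ + ((k+1:ℕ):ℝ) + 1))
      = y ^ k / ((Nat.factorial k : ℝ) * Real.Gamma ((μ+1) + (k : ℝ) + 1)) := by
  rw [fac_gamma_succ]
  have hk1 : ((k:ℝ)+1) ≠ 0 := by positivity
  have hs : k + 1 - 1 = k := rfl
  have : ((k+1:ℕ):ℝ) * y ^ (k+1-1) = ((k:ℝ)+1) * y ^ k := by
    rw [hs]; push_cast; ring
  rw [this, mul_div_mul_left _ _ hk1]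

lemma summable_deriv_terms {μ : ℝ} (hμ : -1 < μ) (y : ℝ) :
    Summable (fun k : ℕ => (k:ℝ) * y ^ (k-1) / ((Nat.factorial k : ℝ) * Real.Gamma (μ + (k : ℝ) + 1))) := by
  rw [← summable_nat_add_iff 1]
  have heq : ∀ k : ℕ, ((k+1:ℕ):ℝ) * y ^ (k+1-1) / ((Nat.factorial (k+1) : ℝ) * Real.Gamma (μ + ((k+1:ℕ):ℝ) + 1))
      = y ^ k / ((Nat.factorial k : ℝ) * Real.Gamma ((μ+1) + (k : ℝ) + 1)) := term_shift' μ y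
  simp only [heq]
  exact summable_G (by linarith) y

lemma deriv_terms_sum {μ : ℝ} (hμ : -1 < μ) (y : ℝ) :
    ∑' k : ℕ, (k:ℝ) * y ^ (k-1) / ((Nat.factorial k : ℝ) * Real.Gamma (μ + (k : ℝ) + 1))
      = besselG (μ+1) y := by
  rw [Summable.tsum_eq_zero_add (summable_deriv_terms hμ y)]
  simp only [Nat.cast_zero, zero_mul, zero_div, zero_add]
  exact tsum_congr (term_shift' μ y)

lemma hasDerivAt_besselG {μ : ℝ} (hμ : -1 < μ) (y : ℝ) :
    HasDerivAt (besselG μ) (besselG (μ+1) y) y := by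
  set R : ℝ := |y| + 1 with hR
  have hRpos : 0 < R := by positivity
  have hyR : y ∈ Ioo (-R) R := by
    constructor
    · have := neg_abs_le y; simp only [hR]; linarith
    · have := le_abs_self y; simp only [hR]; linarith
  have hu_sum : Summable (fun k : ℕ => (k:ℝ) * R ^ (k-1) / ((Nat.factorial k : ℝ) * Real.Gamma (μ + (k : ℝ) + 1))) :=
    summable_deriv_terms hμ R
  have key := hasDerivAt_tsum_of_isPreconnected hu_sum (isOpen_Ioo (a := -R) (b := R))
    (convex_Ioo _ _).isPreconnected
    (g := fun k x => x ^ k / ((Nat.factorial k : ℝ) * Real.Gamma (μ + (k : ℝ) + 1)))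
    (g' := fun k x => (k:ℝ) * x ^ (k-1) / ((Nat.factorial k : ℝ) * Real.Gamma (μ + (k : ℝ) + 1)))
    (fun k x _ => (hasDerivAt_pow k x).div_const _)
    (fun k x hx => ?_) hyR (summable_G hμ y) hyR
  · rw [← deriv_terms_sum hμ y]
    exact key
  · have hd := denom_pos hμ k
    rw [Real.norm_eq_abs, abs_div, abs_of_pos hd]
    rw [div_le_div_iff_of_pos_right hd, abs_mul, Nat.abs_cast, abs_pow]
    apply mul_le_mul_of_nonneg_left _ (Nat.cast_nonneg k)
    apply pow_le_pow_left₀ (abs_nonneg x)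
    rcases hx with ⟨h1, h2⟩
    rw [abs_le]; constructor <;> linarith

set_option maxHeartbeats 1600000 in
/-- Turán-type inequality for `besselG`: `G_{ν-1} G_{ν+1} ≤ G_ν²` for `y > 0`, `ν ≥ 1/2`. -/
lemma besselG_turan {ν : ℝ} (hν : 1/2 ≤ ν) {y : ℝ} (hy : 0 < y) :
    besselG (ν-1) y * besselG (ν+1) y ≤ besselG ν y ^ 2 := by
  have hν1 : (-1:ℝ) < ν - 1 := by linarith
  have hν0 : (-1:ℝ) < ν := by linarith
  set B : ℕ → ℝ := fun k => y ^ k / ((Nat.factorial k : ℝ) * Real.Gamma ((ν-1) + (k : ℝ) + 1)) with hB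
  set C : ℕ → ℝ := fun k => y ^ k / ((Nat.factorial k : ℝ) * Real.Gamma (ν + (k : ℝ) + 1)) with hC
  have hBnonneg : ∀ k, 0 ≤ B k := fun k => by
    have := denom_pos hν1 k; simp only [hB]; positivity
  have hCnonneg : ∀ k, 0 ≤ C k := fun k => by
    have := denom_pos hν0 k; simp only [hC]; positivity
  have hBsum : Summable B := summable_G hν1 y
  have hCsum : Summable C := summable_G hν0 y
  have hkBsum : Summable (fun k : ℕ => (k:ℝ) * B k) := by
    have := summable_kG hν1 y
    simpa [hB, mul_div_assoc] using this
  have hkCsum : Summable (fun k : ℕ => (k:ℝ) * C k) := by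
    have := summable_kG hν0 y
    simpa [hC, mul_div_assoc] using this
  -- C k = B k / (ν + k)
  have hCB : ∀ k : ℕ, C k = B k / (ν + k) := by
    intro k
    have hνk : (0:ℝ) < ν + k := by
      have : (0:ℝ) ≤ k := Nat.cast_nonneg k
      linarith
    have harg : ν + (k:ℝ) + 1 = (ν + k) + 1 := by ring
    have harg2 : (ν-1) + (k:ℝ) + 1 = ν + k := by ring
    simp only [hB, hC, harg, harg2, Real.Gamma_add_one hνk.ne']
    have hfk : (0:ℝ) < (Nat.factorial k : ℝ) := by exact_mod_cast Nat.factorial_pos k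
    have hg : 0 < Real.Gamma (ν + k) := Real.Gamma_pos_of_pos hνk
    field_simp
  -- the two double sums
  have hnorm : ∀ g : ℕ → ℝ, Summable g → Summable (fun k => ‖g k‖) := by
    intro g hg; simpa [Real.norm_eq_abs] using hg.abs
  have hsum1 : Summable (fun z : ℕ × ℕ => B z.1 * ((z.2:ℝ) * C z.2)) :=
    summable_mul_of_summable_norm (hnorm _ hBsum) (hnorm _ hkCsum)
  have hsum2 : Summable (fun z : ℕ × ℕ => ((z.1:ℝ) * B z.1) * C z.2) :=
    summable_mul_of_summable_norm (hnorm _ hkBsum) (hnorm _ hCsum)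
  have hP1 : besselG (ν-1) y * (y * besselG (ν+1) y)
      = ∑' z : ℕ × ℕ, B z.1 * ((z.2:ℝ) * C z.2) := by
    have h2 : y * besselG (ν+1) y = ∑' k : ℕ, (k:ℝ) * C k := by
      have := shift_identity hν0 y
      rw [← this]
      apply tsum_congr; intro k; rw [hC, mul_div_assoc]
    rw [h2]
    exact Summable.tsum_mul_tsum hBsum hkCsum hsum1
  have hP2 : (y * besselG ν y) * besselG ν y
      = ∑' z : ℕ × ℕ, ((z.1:ℝ) * B z.1) * C z.2 := by
    have h1 : y * besselG ν y = ∑' k : ℕ, (k:ℝ) * B k := by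
      have := shift_identity hν1 y
      have hre : ν - 1 + 1 = ν := by ring
      rw [hre] at this
      rw [← this]
      apply tsum_congr; intro k; rw [hB, mul_div_assoc]
    rw [h1]
    exact Summable.tsum_mul_tsum hkBsum hCsum hsum2
  -- D z = (z.2 - z.1) * B z.1 * C z.2
  set D : ℕ × ℕ → ℝ := fun z => ((z.2:ℝ) - (z.1:ℝ)) * (B z.1 * C z.2) with hD
  have hDsum : Summable D := by
    have : D = fun z : ℕ × ℕ => B z.1 * ((z.2:ℝ) * C z.2) - ((z.1:ℝ) * B z.1) * C z.2 := by
      funext z; simp only [hD]; ring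
    rw [this]
    exact hsum1.sub hsum2
  have hDswapsum : Summable (fun z : ℕ × ℕ => D (z.2, z.1)) := by
    have := (Equiv.prodComm ℕ ℕ).summable_iff (f := D)
    exact this.mpr hDsum
  have hswap_eq : ∑' z : ℕ × ℕ, D (z.2, z.1) = ∑' z : ℕ × ℕ, D z := by
    exact (Equiv.prodComm ℕ ℕ).tsum_eq D
  have htermwise : ∀ z : ℕ × ℕ, D z + D (z.2, z.1) ≤ 0 := by
    rintro ⟨j, k⟩
    simp only [hD]
    have hνj : (0:ℝ) < ν + j := by have : (0:ℝ) ≤ j := Nat.cast_nonneg j; linarith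
    have hνk : (0:ℝ) < ν + k := by have : (0:ℝ) ≤ k := Nat.cast_nonneg k; linarith
    rw [hCB k, hCB j]
    have hBj := hBnonneg j
    have hBk := hBnonneg k
    rw [div_eq_mul_inv, div_eq_mul_inv]
    have key : ((k:ℝ) - j) * (B j * (B k * (ν+k)⁻¹)) + ((j:ℝ) - k) * (B k * (B j * (ν+j)⁻¹))
        = -(((k:ℝ) - j)^2 * (B j * B k) * ((ν+j)⁻¹ * (ν+k)⁻¹)) := by
      field_simp
      ring
    rw [key]
    have : 0 ≤ ((k:ℝ) - j)^2 * (B j * B k) * ((ν+j)⁻¹ * (ν+k)⁻¹) := by positivity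
    linarith
  have hS : ∑' z : ℕ × ℕ, D z ≤ 0 := by
    have h2S : (∑' z : ℕ × ℕ, D z) + (∑' z : ℕ × ℕ, D z)
        = ∑' z : ℕ × ℕ, (D z + D (z.2, z.1)) := by
      calc (∑' z : ℕ × ℕ, D z) + (∑' z : ℕ × ℕ, D z)
          = (∑' z : ℕ × ℕ, D z) + (∑' z : ℕ × ℕ, D (z.2, z.1)) := by rw [hswap_eq]
        _ = ∑' z : ℕ × ℕ, (D z + D (z.2, z.1)) := (Summable.tsum_add hDsum hDswapsum).symm
    have := tsum_nonpos (L := SummationFilter.unconditional (ℕ × ℕ)) htermwise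
    linarith [h2S ▸ this]
  -- conclude
  have hmain : y * (besselG (ν-1) y * besselG (ν+1) y) ≤ y * (besselG ν y ^ 2) := by
    have e1 : y * (besselG (ν-1) y * besselG (ν+1) y) = besselG (ν-1) y * (y * besselG (ν+1) y) := by ring
    have e2 : y * (besselG ν y ^ 2) = (y * besselG ν y) * besselG ν y := by ring
    rw [e1, e2, hP1, hP2]
    have : ∑' z : ℕ × ℕ, B z.1 * ((z.2:ℝ) * C z.2) - ∑' z : ℕ × ℕ, ((z.1:ℝ) * B z.1) * C z.2
        = ∑' z : ℕ × ℕ, D z := by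
      rw [← Summable.tsum_sub hsum1 hsum2]
      apply tsum_congr
      intro z
      simp only [hD]
      ring
    linarith [this ▸ hS]
  exact le_of_mul_le_mul_left hmain hy

lemma besselI_eq_s19 {μ x : ℝ} (hx : 0 < x) :
    besselI μ x = (x/2) ^ μ * besselG μ (x^2/4) := by
  unfold besselI besselG
  rw [← tsum_mul_left]
  apply tsum_congr
  intro k
  have hx2 : (0:ℝ) < x/2 := by linarith
  have h1 : (x/2) ^ (μ + 2*(k:ℝ)) = (x/2)^μ * (x/2)^(2*(k:ℝ)) := Real.rpow_add hx2 _ _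
  have h2 : (x/2)^(2*(k:ℝ)) = (x^2/4)^k := by
    have : (2*(k:ℝ)) = ((2*k : ℕ) : ℝ) := by push_cast; ring
    rw [this, Real.rpow_natCast, pow_mul]
    congr 1
    ring
  rw [h1, h2, mul_div_assoc]


/-- for `ν ≥ 1/2`, `a > 0`, and the noncentral chi density
`f(t) = (t^ν/a^(ν-1)) e^{-(t²+a²)/2} I_{ν-1}(at)`, at any `t > 0` in the declining
phase (`f'(t) ≤ 0`) one has `(log f)''(t) ≤ 0`. -/
theorem logConcave_on_declining_phase (ν a : ℝ) (hν : 1 / 2 ≤ ν) (ha : 0 < a)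
    (f : ℝ → ℝ)
    (hf : ∀ t : ℝ, f t = t ^ ν / a ^ (ν - 1) * Real.exp (-(t ^ 2 + a ^ 2) / 2) *
      besselI (ν - 1) (a * t)) :
    ∀ t : ℝ, 0 < t → deriv f t ≤ 0 →
      deriv (deriv (fun s => Real.log (f s))) t ≤ 0 := by
  intro t ht hdecl
  have hμ1 : (-1:ℝ) < ν - 1 := by linarith
  have hμ0 : (-1:ℝ) < ν := by linarith
  have hμ2 : (-1:ℝ) < ν + 1 := by linarith
  set G0 : ℝ → ℝ := besselG (ν-1) with hG0def
  set G1 : ℝ → ℝ := besselG ν with hG1def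
  set G2 : ℝ → ℝ := besselG (ν+1) with hG2def
  -- the y-map
  set Y : ℝ → ℝ := fun s => a^2*s^2/4 with hYdef
  have hYpos : ∀ s : ℝ, 0 < s → 0 < Y s := fun s hs => by
    simp only [hYdef]; positivity
  have hG0pos : ∀ s : ℝ, 0 < s → 0 < G0 (Y s) := fun s hs =>
    besselG_pos hμ1 (le_of_lt (hYpos s hs))
  have hYderiv : ∀ s : ℝ, HasDerivAt Y (a^2*s/2) s := by
    intro s
    have h := (hasDerivAt_pow 2 s).const_mul (a^2/4)
    have : (fun x : ℝ => a^2/4 * x^2) = Y := by funext x; simp only [hYdef]; ring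
    rw [this] at h
    refine h.congr_deriv ?_
    push_cast
    ring
  have hG0deriv : ∀ u : ℝ, HasDerivAt G0 (G1 u) u := by
    intro u
    have := hasDerivAt_besselG hμ1 u
    have harg : ν - 1 + 1 = ν := by ring
    rwa [harg] at this
  have hG1deriv : ∀ u : ℝ, HasDerivAt G1 (G2 u) u := by
    intro u
    exact hasDerivAt_besselG hμ0 u
  -- explicit expressions
  set M : ℝ → ℝ := fun s => ν * Real.log s - (ν-1)*Real.log a + (-(s^2+a^2)/2) +
      ((ν-1) * Real.log (a*s/2) + Real.log (G0 (Y s))) with hMdef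
  set M₁ : ℝ → ℝ := fun s => (2*ν-1)/s - s + (a^2*s/2) * (G1 (Y s) / G0 (Y s)) with hM₁def
  -- Step A : log (f s) = M s for s > 0
  have hbess : ∀ s : ℝ, 0 < s → besselI (ν-1) (a*s) = (a*s/2)^(ν-1) * G0 (Y s) := by
    intro s hs
    have has : 0 < a * s := by positivity
    rw [besselI_eq_s19 has]
    have : (a*s)^2/4 = Y s := by simp only [hYdef]; ring
    rw [this]
  have hfpos : ∀ s : ℝ, 0 < s → 0 < f s := by
    intro s hs
    rw [hf s, hbess s hs]
    have h1 : (0:ℝ) < s ^ ν := Real.rpow_pos_of_pos hs ν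
    have h2 : (0:ℝ) < a ^ (ν-1) := Real.rpow_pos_of_pos ha _
    have h3 : (0:ℝ) < (a*s/2) ^ (ν-1) := Real.rpow_pos_of_pos (by positivity) _
    have h4 := hG0pos s hs
    positivity
  have hstepA : ∀ s : ℝ, 0 < s → Real.log (f s) = M s := by
    intro s hs
    rw [hf s, hbess s hs]
    have h1 : (0:ℝ) < s ^ ν := Real.rpow_pos_of_pos hs ν
    have h2 : (0:ℝ) < a ^ (ν-1) := Real.rpow_pos_of_pos ha _
    have h3 : (0:ℝ) < (a*s/2) ^ (ν-1) := Real.rpow_pos_of_pos (by positivity) _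
    have h4 := hG0pos s hs
    have he : (0:ℝ) < Real.exp (-(s^2+a^2)/2) := Real.exp_pos _
    rw [Real.log_mul (by positivity) (by positivity),
        Real.log_mul (by positivity) he.ne',
        Real.log_mul h3.ne' h4.ne',
        Real.log_div h1.ne' h2.ne',
        Real.log_rpow hs, Real.log_rpow ha, Real.log_rpow (by positivity : (0:ℝ) < a*s/2),
        Real.log_exp]
  -- Step B : HasDerivAt M (M₁ s) s for s > 0
  have hstepB : ∀ s : ℝ, 0 < s → HasDerivAt M (M₁ s) s := by
    intro s hs
    have hlog1 : HasDerivAt (fun x : ℝ => ν * Real.log x) (ν * s⁻¹) s :=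
      (Real.hasDerivAt_log hs.ne').const_mul ν
    have hquad : HasDerivAt (fun x : ℝ => -(x^2+a^2)/2) (-s) s := by
      have h := ((hasDerivAt_pow 2 s).add_const (a^2)).neg.div_const 2
      refine h.congr_deriv ?_
      push_cast; ring
    have hlin : HasDerivAt (fun x : ℝ => a*x/2) (a/2) s := by
      have h := (hasDerivAt_id s).const_mul (a/2)
      simp only [id_eq, mul_one] at h
      have e : (fun x : ℝ => a/2 * x) = fun x : ℝ => a*x/2 := by funext x; ring
      rwa [e] at h
    have hlog2 : HasDerivAt (fun x : ℝ => (ν-1) * Real.log (a*x/2)) ((ν-1) * ((a/2)/(a*s/2))) s :=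
      (hlin.log (by positivity)).const_mul (ν-1)
    have hGcomp : HasDerivAt (fun x : ℝ => G0 (Y x)) (G1 (Y s) * (a^2*s/2)) s :=
      (hG0deriv (Y s)).comp s (hYderiv s)
    have hlog3 : HasDerivAt (fun x : ℝ => Real.log (G0 (Y x)))
        ((G1 (Y s) * (a^2*s/2)) / G0 (Y s)) s :=
      hGcomp.log (hG0pos s hs).ne'
    have total := ((hlog1.sub_const ((ν-1)*Real.log a)).add hquad).add (hlog2.add hlog3)
    have hM : M = fun s => (ν * Real.log s - (ν-1)*Real.log a + (-(s^2+a^2)/2)) +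
        ((ν-1) * Real.log (a*s/2) + Real.log (G0 (Y s))) := by
      funext x; simp only [hMdef]
    rw [hM]
    refine total.congr_deriv ?_
    simp only [hM₁def]
    have hG0ne := (hG0pos s hs).ne'
    field_simp
    ring
  -- derivative of f, sign of M₁ t
  have hev : f =ᶠ[nhds t] (fun s => Real.exp (M s)) := by
    filter_upwards [Ioi_mem_nhds ht] with s hs
    rw [← hstepA s hs, Real.exp_log (hfpos s hs)]
  have hfderiv : HasDerivAt f (Real.exp (M t) * M₁ t) t := by
    have h := (hstepB t ht).exp
    exact h.congr_of_eventuallyEq hev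
  have hM₁t : M₁ t ≤ 0 := by
    have := hfderiv.deriv
    rw [this] at hdecl
    nlinarith [Real.exp_pos (M t)]
  -- second derivative
  set Qd : ℝ := (G2 (Y t) * G0 (Y t) - G1 (Y t) * G1 (Y t)) / (G0 (Y t))^2 with hQddef
  have hstepC : HasDerivAt M₁
      (-(2*ν-1)/t^2 - 1 + ((a^2/2) * (G1 (Y t) / G0 (Y t)) + (a^2*t/2) * (Qd * (a^2*t/2)))) t := by
    have h1 : HasDerivAt (fun x : ℝ => (2*ν-1)/x) (-(2*ν-1)/t^2) t := by
      have h := (hasDerivAt_inv ht.ne').const_mul (2*ν-1)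
      have e : (fun x : ℝ => (2*ν-1) * x⁻¹) = fun x : ℝ => (2*ν-1)/x := by
        funext x; exact (div_eq_mul_inv _ _).symm
      rw [e] at h
      refine h.congr_deriv ?_
      field_simp
    have h2 : HasDerivAt (fun x : ℝ => x) (1:ℝ) t := hasDerivAt_id t
    have hQ : HasDerivAt (fun u : ℝ => G1 u / G0 u) Qd (Y t) := by
      have := (hG1deriv (Y t)).div (hG0deriv (Y t)) (hG0pos t ht).ne'
      exact this
    have hQcomp : HasDerivAt (fun x : ℝ => G1 (Y x) / G0 (Y x)) (Qd * (a^2*t/2)) t :=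
      hQ.comp t (hYderiv t)
    have hlin2 : HasDerivAt (fun x : ℝ => a^2*x/2) (a^2/2) t := by
      have h := (hasDerivAt_id t).const_mul (a^2/2)
      simp only [id_eq, mul_one] at h
      have e : (fun x : ℝ => a^2/2 * x) = fun x : ℝ => a^2*x/2 := by funext x; ring
      rwa [e] at h
    have hprod := hlin2.mul hQcomp
    have total := (h1.sub h2).add hprod
    have e : M₁ = fun x : ℝ => ((2*ν-1)/x - x) + (a^2*x/2) * (G1 (Y x) / G0 (Y x)) := by
      funext x; simp only [hM₁def]
    rw [e]
    exact total
  -- identify deriv (deriv (log ∘ f)) t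
  have hlogev : (fun s => Real.log (f s)) =ᶠ[nhds t] M := by
    filter_upwards [Ioi_mem_nhds ht] with s hs
    exact hstepA s hs
  have hd1 : deriv (fun s => Real.log (f s)) =ᶠ[nhds t] deriv M := hlogev.deriv
  have hd2 : deriv M =ᶠ[nhds t] M₁ := by
    filter_upwards [Ioi_mem_nhds ht] with s hs
    exact (hstepB s hs).deriv
  have hfinal : deriv (deriv (fun s => Real.log (f s))) t = deriv M₁ t := by
    apply Filter.EventuallyEq.deriv_eq
    exact hd1.trans hd2
  rw [hfinal, hstepC.deriv]
  -- Step E : the sign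
  have hQdnonpos : Qd ≤ 0 := by
    have hT := besselG_turan hν (hYpos t ht)
    apply div_nonpos_of_nonpos_of_nonneg
    · simp only [hG0def, hG1def, hG2def]
      nlinarith [hT]
    · positivity
  have hsplit : -(2*ν-1)/t^2 - 1 + ((a^2/2) * (G1 (Y t) / G0 (Y t)) + (a^2*t/2) * (Qd * (a^2*t/2)))
      = M₁ t / t - 2*(2*ν-1)/t^2 + (a^2*t/2)^2 * Qd := by
    simp only [hM₁def]
    field_simp
    ring
  rw [hsplit]
  have ht2 : (0:ℝ) < t^2 := by positivity
  have hA : M₁ t / t ≤ 0 := div_nonpos_of_nonpos_of_nonneg hM₁t ht.le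
  have hB : 0 ≤ 2*(2*ν-1)/t^2 := by
    apply div_nonneg _ ht2.le
    linarith
  have hC : (a^2*t/2)^2 * Qd ≤ 0 := mul_nonpos_of_nonneg_of_nonpos (by positivity) hQdnonpos
  linarith
end
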